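/- arXiv:1302.1952 — 6 statements merged into one kernel-verified Lean document; each statement's English description precedes it below -/
import Mathlib

section
/- Let m, n be positive integers with m > n, and let ψ₁, …, ψ_n : (0,∞) → (0,∞) be functions tending to zero at infinity. If the series ∑_{r=1}^∞ ψ₁(r)⋯ψ_n(r) r^{m−n−1} converges, then the set W₀(m,n,ψ) has mn-dimensional Lebesgue measure zero. -/
open MeasureTheory Filter

/-- Supremum norm of an integer vector, as a real number. -/
noncomputable def supZ {k : ℕ} (q : Fin k → ℤ) : ℝ := ‖(fun i => (q i : ℝ))‖

/-- The set `W₀(m,n,ψ)` of `ψ`-approximable `m × n` matrices (rows indexed by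
`Fin m`, columns by `Fin n`) with all entries in `[-1/2, 1/2]`. -/
def W0 (m n : ℕ) (ψ : Fin n → ℝ → ℝ) : Set (Fin m → Fin n → ℝ) :=
  {X | (∀ j i, X j i ∈ Set.Icc (-(1:ℝ)/2) (1/2)) ∧
    {q : Fin m → ℤ | q ≠ 0 ∧ ∀ i, |∑ j, (q j : ℝ) * X j i| < ψ i (supZ q)}.Infinite}

/-! Borel–Cantelli. If `‖q‖ = r` is attained at the coordinate `j₀`, then integrating out row `j₀`
of `X` (Fubini) shows that the matrices of the unit cube with `|q · Xᵢ| < ψᵢ(r)` for all columns `i`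
have measure at most `∏ᵢ 2ψᵢ(r)/r`. The shell of integer vectors of sup norm `r` has at most
`2m(2r+1)^(m-1)` points, so the measures of these sets sum to at most a constant times
`∑ᵣ ψ₁(r)⋯ψₙ(r) r^(m-n-1) < ∞`. -/

open Set
open scoped ENNReal

theorem MeasureTheory.Measure.prod_apply_le_of_fiber_le {α β : Type*} [MeasurableSpace α]
    [MeasurableSpace β] {μ : Measure α} {ν : Measure β} [SFinite μ] [SFinite ν]
    {s : Set (α × β)} (hs : MeasurableSet s) {t : Set β} (hst : ∀ p ∈ s, p.2 ∈ t) {c : ℝ≥0∞}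
    (hc : ∀ z ∈ t, μ ((·, z) ⁻¹' s) ≤ c) : μ.prod ν s ≤ c * ν t := by
  rw [Measure.prod_apply_symm hs]
  refine (lintegral_mono fun z => ?_).trans (lintegral_indicator_const_le t c)
  by_cases hz : z ∈ t
  · simpa [hz] using hc z hz
  · have : (·, z) ⁻¹' s = ∅ := eq_empty_of_forall_notMem fun y hy => hz (hst _ hy)
    simp [hz, this]

theorem volume_setOf_forall_abs_mul_add_lt_le {ι : Type*} [Fintype ι] {a : ℝ} (ha : a ≠ 0)
    (b c : ι → ℝ) :
    volume {y : ι → ℝ | ∀ i, |a * y i + b i| < c i} ≤ ∏ i, ENNReal.ofReal (2 * (c i / |a|)) := by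
  calc volume {y : ι → ℝ | ∀ i, |a * y i + b i| < c i}
      ≤ volume (univ.pi fun i => Metric.ball (-b i / a) (c i / |a|)) := by
        refine measure_mono fun y hy i _ => ?_
        rw [Metric.mem_ball, Real.dist_eq, lt_div_iff₀ (abs_pos.2 ha), ← abs_mul,
          sub_mul, div_mul_cancel₀ _ ha, mul_comm, sub_neg_eq_add]
        exact hy i
    _ = _ := by simp only [volume_pi_pi, Real.volume_ball]

theorem ENNReal.tsum_le_tsum_encard_fiber_mul {β γ : Type*} {f : β → ℝ≥0∞} (N : β → γ)
    {g : γ → ℝ≥0∞} (h : ∀ b, f b ≤ g (N b)) :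
    ∑' b, f b ≤ ∑' c, ((N ⁻¹' {c}).encard : ℝ≥0∞) * g c :=
  calc ∑' b, f b ≤ ∑' b, g (N b) := ENNReal.tsum_le_tsum h
    _ = ∑' c, ∑' b : N ⁻¹' {c}, g (N b) := (ENNReal.tsum_fiberwise _ N).symm
    _ = ∑' c, ∑' _ : N ⁻¹' {c}, g c :=
        tsum_congr fun c => tsum_congr fun b => by rw [show N b = c from b.2]
    _ = _ := tsum_congr fun c => ENNReal.tsum_const (g c)

theorem ENNReal.prod_ofReal_le_ofReal_abs_prod {ι : Type*} (s : Finset ι) (f : ι → ℝ) :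
    ∏ i ∈ s, ENNReal.ofReal (f i) ≤ ENNReal.ofReal |∏ i ∈ s, f i| := by
  rw [Finset.abs_prod, ENNReal.ofReal_prod_of_nonneg fun i _ => abs_nonneg _]
  exact Finset.prod_le_prod' fun i _ => ENNReal.ofReal_le_ofReal (le_abs_self _)

theorem sum_mul_insertNth {k n : ℕ} (a : Fin (k + 1) → ℝ) (j₀ : Fin (k + 1)) (y : Fin n → ℝ)
    (z : Fin k → Fin n → ℝ) (i : Fin n) :
    ∑ j, a j * Fin.insertNth (α := fun _ => Fin n → ℝ) j₀ y z j i
      = a j₀ * y i + ∑ j, a (j₀.succAbove j) * z j i := by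
  simp [Fin.sum_univ_succAbove _ j₀]

def unitCube (ι κ : Type*) : Set (ι → κ → ℝ) := {X | ∀ j i, X j i ∈ Icc (-(1:ℝ)/2) (1/2)}

theorem unitCube_eq_pi (ι κ : Type*) :
    unitCube ι κ = univ.pi fun _ => univ.pi fun _ => Icc (-(1:ℝ)/2) (1/2) := by
  ext X; simp only [unitCube, mem_ofPred_eq, Set.mem_pi, mem_univ, forall_const]

theorem volume_unitCube (ι κ : Type*) [Fintype ι] [Fintype κ] : volume (unitCube ι κ) = 1 := by
  simp only [unitCube_eq_pi, volume_pi_pi, Real.volume_Icc]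
  norm_num

theorem measurableSet_unitCube (ι κ : Type*) [Countable ι] [Countable κ] :
    MeasurableSet (unitCube ι κ) := by
  rw [unitCube_eq_pi]
  exact .univ_pi fun _ => .univ_pi fun _ => measurableSet_Icc

theorem measurableSet_unitCube_inter_slab {ι κ : Type*} [Fintype ι] [Fintype κ] (a : ι → ℝ)
    (c : κ → ℝ) : MeasurableSet {X ∈ unitCube ι κ | ∀ i, |∑ j, a j * X j i| < c i} := by
  have hslab : MeasurableSet {X : ι → κ → ℝ | ∀ i, |∑ j, a j * X j i| < c i} := by
    rw [ofPred_forall]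
    exact .iInter fun i => measurableSet_lt (by fun_prop) measurable_const
  exact (measurableSet_unitCube ι κ).inter hslab

theorem volume_unitCube_inter_slab_le {k n : ℕ} (a : Fin (k + 1) → ℝ) {j₀ : Fin (k + 1)}
    (ha : a j₀ ≠ 0) (c : Fin n → ℝ) :
    volume {X ∈ unitCube (Fin (k + 1)) (Fin n) | ∀ i, |∑ j, a j * X j i| < c i}
      ≤ ∏ i, ENNReal.ofReal (2 * (c i / |a j₀|)) := by
  set S := {X ∈ unitCube (Fin (k + 1)) (Fin n) | ∀ i, |∑ j, a j * X j i| < c i}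
  have hS : MeasurableSet S := measurableSet_unitCube_inter_slab a c
  have he := volume_preserving_piFinSuccAbove (fun _ : Fin (k + 1) => Fin n → ℝ) j₀
  rw [← he.symm.measure_preimage hS.nullMeasurableSet]
  calc volume ((MeasurableEquiv.piFinSuccAbove _ j₀).symm ⁻¹' S)
      ≤ (∏ i, ENNReal.ofReal (2 * (c i / |a j₀|))) * volume (unitCube (Fin k) (Fin n)) := by
        refine Measure.prod_apply_le_of_fiber_le (hS.preimage (MeasurableEquiv.measurable _))
          (fun p hp j i => ?_) (fun z _ => ?_)
        · simpa using hp.1 (j₀.succAbove j) i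
        · refine (measure_mono fun y hy i => ?_).trans (volume_setOf_forall_abs_mul_add_lt_le ha
            (fun i => ∑ j, a (j₀.succAbove j) * z j i) c)
          simpa [sum_mul_insertNth] using hy.2 i
    _ = _ := by rw [volume_unitCube, mul_one]

def supNatAbs {m : ℕ} (q : Fin m → ℤ) : ℕ := Finset.univ.sup fun j => (q j).natAbs

theorem natAbs_le_supNatAbs {m : ℕ} (q : Fin m → ℤ) (j : Fin m) : (q j).natAbs ≤ supNatAbs q :=
  Finset.le_sup (f := fun j => (q j).natAbs) (Finset.mem_univ j)

theorem exists_natAbs_eq_supNatAbs {k : ℕ} (q : Fin (k + 1) → ℤ) :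
    ∃ j, (q j).natAbs = supNatAbs q := by
  obtain ⟨j, -, hj⟩ := Finset.exists_mem_eq_sup _ Finset.univ_nonempty fun j => (q j).natAbs
  exact ⟨j, hj.symm⟩

theorem supZ_eq_supNatAbs {k : ℕ} (q : Fin (k + 1) → ℤ) : supZ q = supNatAbs q := by
  obtain ⟨j₀, hj₀⟩ := exists_natAbs_eq_supNatAbs q
  have hnorm : ∀ j, ‖(q j : ℝ)‖ = (q j).natAbs := fun j => by
    rw [Int.norm_cast_real, Int.norm_eq_abs, Nat.cast_natAbs, Int.cast_abs]
  refine le_antisymm ((pi_norm_le_iff_of_nonneg (Nat.cast_nonneg _)).2 fun j => ?_) ?_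
  · rw [hnorm]
    exact_mod_cast natAbs_le_supNatAbs q j
  · rw [← hj₀, ← hnorm]
    exact norm_le_pi_norm (fun i => (q i : ℝ)) j₀

theorem encard_supNatAbs_eq_le (k r : ℕ) :
    {q : Fin (k + 1) → ℤ | supNatAbs q = r}.encard ≤ ((k + 1) * (2 * (2 * r + 1) ^ k) : ℕ) := by
  classical
  -- a vector of sup norm `r` has a coordinate `± r` and all others in `[-r, r]`
  let face (j₀ : Fin (k + 1)) : Finset (Fin (k + 1) → ℤ) := Fintype.piFinset fun j =>
    if j = j₀ then {(r:ℤ), -(r:ℤ)} else Finset.Icc (-(r:ℤ)) r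
  have hsub : {q : Fin (k + 1) → ℤ | supNatAbs q = r} ⊆ ↑(Finset.univ.biUnion face) := by
    intro q (hq : supNatAbs q = r)
    obtain ⟨j₀, hj₀⟩ := exists_natAbs_eq_supNatAbs q
    simp only [Finset.coe_biUnion, Finset.coe_univ, mem_univ, iUnion_true, mem_iUnion,
      Finset.mem_coe]
    refine ⟨j₀, Fintype.mem_piFinset.2 fun j => ?_⟩
    have := natAbs_le_supNatAbs q j
    split_ifs with hj
    · subst hj; simp only [Finset.mem_insert, Finset.mem_singleton]; omega
    · rw [Finset.mem_Icc]; omega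
  have hface : ∀ j₀, (face j₀).card ≤ 2 * (2 * r + 1) ^ k := fun j₀ => by
    simp only [face, Fintype.card_piFinset, Fin.prod_univ_succAbove _ j₀, if_true,
      Fin.succAbove_ne, if_false, Int.card_Icc, Finset.prod_const, Finset.card_univ,
      Fintype.card_fin]
    refine Nat.mul_le_mul (Finset.card_le_two) (le_of_eq ?_)
    congr 1; omega
  calc _ ≤ ((Finset.univ.biUnion face).card : ℕ∞) := by
        rw [← encard_coe_eq_coe_finsetCard]; exact encard_le_encard hsub
    _ ≤ ((∑ j₀, (face j₀).card : ℕ) : ℕ∞) := by exact_mod_cast Finset.card_biUnion_le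
    _ ≤ _ := by
        gcongr
        calc _ ≤ ∑ _j₀ : Fin (k + 1), 2 * (2 * r + 1) ^ k := Finset.sum_le_sum fun j₀ _ => hface j₀
          _ = _ := by simp

def approxSet {m n : ℕ} (ψ : Fin n → ℝ → ℝ) (q : Fin m → ℤ) : Set (Fin m → Fin n → ℝ) :=
  {X ∈ unitCube (Fin m) (Fin n) | q ≠ 0 ∧ ∀ i, |∑ j, (q j : ℝ) * X j i| < ψ i (supZ q)}

theorem W0_subset_limsup_approxSet {m n : ℕ} (ψ : Fin n → ℝ → ℝ) :
    W0 m n ψ ⊆ limsup (approxSet ψ) cofinite := fun X ⟨hX, hinf⟩ => by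
  rw [mem_limsup_iff_frequently_mem, frequently_cofinite_iff_infinite]
  exact hinf.mono fun q hq => ⟨hX, hq⟩

theorem volume_approxSet_le {k n : ℕ} (ψ : Fin n → ℝ → ℝ) (q : Fin (k + 1) → ℤ) :
    volume (approxSet ψ q)
      ≤ ∏ i, ENNReal.ofReal (2 * (ψ i (supNatAbs q) / supNatAbs q)) := by
  by_cases hq : q = 0
  · simp [approxSet, hq]
  obtain ⟨j₀, hj₀⟩ := exists_natAbs_eq_supNatAbs q
  have hqj₀ : |(q j₀ : ℝ)| = supNatAbs q := by rw [← hj₀, Nat.cast_natAbs, Int.cast_abs]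
  have hne : q j₀ ≠ 0 := by
    obtain ⟨j, hj⟩ := Function.ne_iff.1 hq
    have := natAbs_le_supNatAbs q j
    rw [Pi.zero_apply] at hj
    omega
  calc volume (approxSet ψ q)
      ≤ volume {X ∈ unitCube (Fin (k + 1)) (Fin n) |
          ∀ i, |∑ j, (q j : ℝ) * X j i| < ψ i (supZ q)} :=
        measure_mono fun X hX => ⟨hX.1, hX.2.2⟩
    _ ≤ ∏ i, ENNReal.ofReal (2 * (ψ i (supZ q) / |(q j₀ : ℝ)|)) :=
        volume_unitCube_inter_slab_le (fun j => (q j : ℝ)) (by exact_mod_cast hne) _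
    _ = _ := by rw [hqj₀, supZ_eq_supNatAbs]

theorem shell_term_le {k n : ℕ} (hnk : n ≤ k) (x : Fin n → ℝ) {t : ℝ} (ht : 1 ≤ t) :
    (k + 1) * (2 * (2 * t + 1) ^ k) * |∏ i, 2 * (x i / t)|
      ≤ (k + 1) * 2 * 3 ^ k * 2 ^ n * |(∏ i, x i) * t ^ (k - n)| := by
  have ht₀ : 0 < t := by linarith
  have hprod : |∏ i, 2 * (x i / t)| = 2 ^ n * |∏ i, x i| / t ^ n := by
    simp [Finset.abs_prod, Finset.prod_mul_distrib, Finset.prod_div_distrib, abs_div,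
      abs_of_pos ht₀, mul_div_assoc]
  have hpow : (2 * t + 1) ^ k ≤ 3 ^ k * (t ^ (k - n) * t ^ n) := by
    rw [pow_sub_mul_pow t hnk, ← mul_pow]
    gcongr
    linarith
  rw [hprod, abs_mul, abs_of_pos (pow_pos ht₀ _)]
  calc _ ≤ (k + 1) * (2 * (3 ^ k * (t ^ (k - n) * t ^ n))) * (2 ^ n * |∏ i, x i| / t ^ n) := by
        gcongr
    _ = _ := by field_simp

theorem summable_shell {k n : ℕ} (hnk : n ≤ k) (ψ : Fin n → ℝ → ℝ)
    (hconv : Summable fun r : ℕ => (∏ i, ψ i ((r : ℝ) + 1)) * ((r : ℝ) + 1) ^ (k - n)) :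
    Summable fun r : ℕ =>
      (((k + 1) * (2 * (2 * r + 1) ^ k) : ℕ) : ℝ) * |∏ i, 2 * (ψ i r / r)| := by
  refine (summable_nat_add_iff 1).1 <| .of_nonneg_of_le (fun r => by positivity) (fun r => ?_)
    (hconv.abs.mul_left ((k + 1) * 2 * 3 ^ k * 2 ^ n : ℝ))
  push_cast
  exact shell_term_le hnk _ (le_add_of_nonneg_left r.cast_nonneg)

theorem stmt0_general (m n : ℕ) (hmn : n < m)
    (ψ : Fin n → ℝ → ℝ)
    (hconv : Summable (fun r : ℕ =>
      (∏ i, ψ i ((r : ℝ) + 1)) * ((r : ℝ) + 1) ^ (m - n - 1))) :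
    volume (W0 m n ψ) = 0 := by
  obtain ⟨k, rfl⟩ : ∃ k, m = k + 1 := ⟨m - 1, by omega⟩
  rw [show k + 1 - n - 1 = k - n by omega] at hconv
  refine measure_mono_null (W0_subset_limsup_approxSet ψ) (measure_limsup_cofinite_eq_zero ?_)
  refine ne_top_of_le_ne_top ?_
    (ENNReal.tsum_le_tsum_encard_fiber_mul supNatAbs
      (g := fun r => ∏ i, ENNReal.ofReal (2 * (ψ i r / r))) (volume_approxSet_le ψ))
  refine ne_top_of_le_ne_top
    (ENNReal.tsum_coe_ne_top_iff_summable.2 (summable_shell (by omega) ψ hconv).toNNReal)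
    (ENNReal.tsum_le_tsum fun r => ?_)
  calc _ ≤ (((k + 1) * (2 * (2 * r + 1) ^ k) : ℕ) : ℝ≥0∞)
          * ENNReal.ofReal |∏ i, 2 * (ψ i r / r)| := by
        gcongr
        · exact ENat.toENNReal_le.2 (encard_supNatAbs_eq_le k r)
        · exact ENNReal.prod_ofReal_le_ofReal_abs_prod _ _
    _ = _ := by rw [← ENNReal.ofReal_natCast, ← ENNReal.ofReal_mul (Nat.cast_nonneg _)]; rfl

theorem stmt0 (m n : ℕ) (hn : 0 < n) (hmn : n < m)
    (ψ : Fin n → ℝ → ℝ)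
    (hpos : ∀ i, ∀ r > (0:ℝ), 0 < ψ i r)
    (hlim : ∀ i, Tendsto (ψ i) atTop (nhds 0))
    (hconv : Summable (fun r : ℕ =>
      (∏ i, ψ i ((r : ℝ) + 1)) * ((r : ℝ) + 1) ^ (m - n - 1))) :
    volume (W0 m n ψ) = 0 :=
  stmt0_general m n hmn ψ hconv
end

section
/- Let m > n > 0 be integers, let e₁, …, e_n ∈ ℝ^m be linearly independent vectors, and let τ₁, …, τ_n be positive real numbers. Assume there is a function ε : ℕ → ℝ with ε(Q) → 0 as Q → ∞ such that for infinitely many positive integers Q there exist m linearly independent vectors q^{(1)}, …, q^{(m)} ∈ ℤ^m satisfying, for every j ∈ {1,…,m}: ‖q^{(j)}‖ ≤ Q and |q^{(j)} · e_i| ≤ Q^{−τ_i + ε(Q)} for all i ∈ {1,…,n}. Then every linear subspace F of ℝ^m which is defined over the rationals and contains e₁, …, e_n satisfies dim F ≥ n + τ₁ + … + τ_n. -/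
open MeasureTheory Filter

/-- A subspace of `ℝ^m` is defined over the rationals if it is spanned by
vectors all of whose coordinates are rational. -/
def DefinedOverQ {m : ℕ} (F : Submodule ℝ (Fin m → ℝ)) : Prop :=
  ∃ B : Set (Fin m → ℝ), (∀ v ∈ B, ∀ i, ∃ a : ℚ, v i = (a : ℝ)) ∧ F = Submodule.span ℝ B

/-!
Let `d = dim F` and extend `e₁, …, e_n` to a basis `b` of `F`. Since `F` is rational it also has
a basis `c` of integer vectors, `c = P b`. For a good `Q` the `q⁽ʲ⁾` span `ℝ^m`, so `d` of them
give a matrix `(q⁽σ ʲ⁾ · c_l)` with nonzero integer determinant, of absolute value at least `1`.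
That determinant is `det P · det (q⁽σ ʲ⁾ · b_k)`; bounding the rows of the second matrix by
`Q^(-τ_i + ε(Q))` for `b_k = e_i` and by `O(Q)` otherwise gives `1 ≪ Q^(d - n - ∑ τ_i + n ε(Q))`.
Letting `Q → ∞` along the good values forces `d - n - ∑ τ_i ≥ 0`.
-/

open Finset Matrix
open scoped Nat

theorem Module.Basis.sumExtend_apply_inl {K V ι : Type*} [Field K] [AddCommGroup V] [Module K V]
    {v : ι → V} (hs : LinearIndependent K v) (i : ι) : sumExtend hs (Sum.inl i) = v i := by
  classical
  rw [sumExtend, reindex_apply, coe_extend]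
  -- `sumExtend` reindexes along a `calc` of equivalences, which `simp` cannot see through.
  show ((Equiv.Set.sumDiffSubset (hs.linearIndepOn_id.subset_extend _)) (Sum.inl ⟨v i, i, rfl⟩) : V)
    = v i
  rw [Equiv.Set.sumDiffSubset_apply_inl]

theorem LinearIndependent.exists_basis_sum_fin {K V ι : Type*} [Field K] [AddCommGroup V]
    [Module K V] [FiniteDimensional K V] {v : ι → V} (hv : LinearIndependent K v) :
    ∃ p, ∃ b : Module.Basis (ι ⊕ Fin p) K V, ∀ i, b (.inl i) = v i := by
  let b := Module.Basis.sumExtend hv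
  have : Finite (Module.Basis.sumExtendIndex hv) :=
    (Module.Finite.finite_basis b).of_injective _ Sum.inr_injective
  have : Fintype (Module.Basis.sumExtendIndex hv) := Fintype.ofFinite _
  refine ⟨_, b.reindex (Equiv.sumCongr (Equiv.refl _) (Fintype.equivFin _)), fun i => ?_⟩
  simp [b, Module.Basis.sumExtend_apply_inl]

theorem Module.Basis.exists_matrix_eq_sum_smul {K V ι κ : Type*} [Field K] [AddCommGroup V]
    [Module K V] [Fintype ι] {F : Submodule K V} (b : Module.Basis ι K F) {x : κ → V}
    (hx : ∀ l, x l ∈ F) : ∃ P : Matrix κ ι K, ∀ l, x l = ∑ k, P l k • (b k : V) :=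
  ⟨fun l k => b.repr ⟨x l, hx l⟩ k, fun l => by
    simpa only [map_sum, map_smul, Submodule.subtype_apply] using
      congrArg F.subtype (b.sum_repr ⟨x l, hx l⟩).symm⟩

theorem exists_pos_smul_eq_intCast {α : Type*} [Fintype α] {v : α → ℝ}
    (hv : ∀ i, ∃ a : ℚ, v i = a) :
    ∃ N : ℕ, 0 < N ∧ ∃ z : α → ℤ, (N : ℝ) • v = fun i => (z i : ℝ) := by
  classical
  choose a ha using hv
  refine ⟨∏ i, (a i).den, prod_pos fun i _ => (a i).pos,
    fun i => (a i).num * ∏ j ∈ univ.erase i, (a j).den, funext fun i => ?_⟩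
  have hnum : (a i : ℝ) * (a i).den = (a i).num := by exact_mod_cast Rat.mul_den_eq_num (a i)
  rw [Pi.smul_apply, smul_eq_mul, ha i, ← mul_prod_erase univ _ (mem_univ i)]
  push_cast
  linear_combination (∏ j ∈ univ.erase i, ((a j).den : ℝ)) * hnum

theorem DefinedOverQ.exists_intCast_linearIndependent {m : ℕ} {F : Submodule ℝ (Fin m → ℝ)}
    (hF : DefinedOverQ F) {ι : Type*} [Fintype ι] (hι : Fintype.card ι = Module.finrank ℝ F) :
    ∃ c : ι → Fin m → ℤ, (∀ l, (fun i => (c l i : ℝ)) ∈ F) ∧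
      LinearIndependent ℝ fun l i => (c l i : ℝ) := by
  obtain ⟨B, hBrat, rfl⟩ := hF
  obtain ⟨b, hbB, hspan, hli⟩ := exists_linearIndependent ℝ B
  have : Fintype b := hli.setFinite.fintype
  have hcard : Fintype.card ι = Fintype.card b := by
    rw [hι, ← hspan, finrank_span_set_eq_card hli, Set.toFinset_card]
  let E : ι ≃ b := Fintype.equivOfCardEq hcard
  choose N hN z hz using fun l => exists_pos_smul_eq_intCast fun i => hBrat _ (hbB (E l).2) i
  refine ⟨z, fun l => ?_, ?_⟩
  · rw [← hz l, ← hspan]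
    exact Submodule.smul_mem _ _ (Submodule.subset_span (E l).2)
  · have hzE : (fun l i => (z l i : ℝ)) = fun l => (N l : ℝ) • (E l : Fin m → ℝ) :=
      funext fun l => (hz l).symm
    rw [hzE]
    exact (hli.comp E E.injective).units_smul fun l => Units.mk0 _ (Nat.cast_pos.mpr (hN l)).ne'

theorem Matrix.abs_det_le_factorial_mul_prod {ι : Type*} [Fintype ι] [DecidableEq ι]
    (A : Matrix ι ι ℝ) {r : ι → ℝ} (h : ∀ k j, |A k j| ≤ r k) :
    |A.det| ≤ (Fintype.card ι)! * ∏ k, r k :=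
  calc |A.det| = |∑ σ : Equiv.Perm ι, Equiv.Perm.sign σ • ∏ i, A (σ i) i| := by rw [det_apply]
    _ ≤ ∑ σ : Equiv.Perm ι, |Equiv.Perm.sign σ • ∏ i, A (σ i) i| := abs_sum_le_sum_abs _ _
    _ = ∑ σ : Equiv.Perm ι, ∏ i, |A (σ i) i| := by simp [abs_prod, Units.smul_def, abs_unit_intCast]
    _ ≤ ∑ σ : Equiv.Perm ι, ∏ i, r (σ i) := by gcongr with σ _ i; exact h _ _
    _ = (Fintype.card ι)! * ∏ k, r k := by simp [Equiv.prod_comp, Fintype.card_perm]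

theorem abs_dotProduct_le_norm_mul_sum_abs {α : Type*} [Fintype α] (v w : α → ℝ) :
    |v ⬝ᵥ w| ≤ ‖v‖ * ∑ i, |w i| :=
  calc |v ⬝ᵥ w| ≤ ∑ i, |v i| * |w i| := by
        simpa only [dotProduct, abs_mul] using abs_sum_le_sum_abs (fun i => v i * w i) univ
    _ ≤ ∑ i, ‖v‖ * |w i| := by
        gcongr with i; exact (Real.norm_eq_abs (v i)).symm.trans_le (norm_le_pi_norm v i)
    _ = ‖v‖ * ∑ i, |w i| := by rw [mul_sum]

theorem exists_det_dotProduct_ne_zero {ι α J : Type*} [Fintype ι] [DecidableEq ι] [Fintype α]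
    {u : ι → α → ℝ} (hu : LinearIndependent ℝ u) {w : J → α → ℝ}
    (hw : Submodule.span ℝ (Set.range w) = ⊤) :
    ∃ σ : ι → J, (of fun k j => w (σ j) ⬝ᵥ u k).det ≠ 0 := by
  set T := (Matrix.of u).mulVecLin
  have hT : LinearMap.range T = ⊤ := by
    apply Submodule.eq_top_of_finrank_eq
    rw [← Matrix.rank, Matrix.rank_eq_finrank_span_row, Module.finrank_fintype_fun_eq_card]
    exact finrank_span_eq_card hu
  have hTw : Submodule.span ℝ (Set.range (T ∘ w)) = ⊤ := by
    rw [Set.range_comp, ← Submodule.map_span, hw, Submodule.map_top, hT]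
  obtain ⟨κ, a, -, hspan, hli⟩ := exists_linearIndependent' ℝ (T ∘ w)
  let E := (Module.Basis.mk hli (hspan.trans hTw).ge).indexEquiv (Pi.basisFun ℝ ι)
  refine ⟨a ∘ E.symm, ?_⟩
  rw [← isUnit_iff_ne_zero, ← Matrix.isUnit_iff_isUnit_det,
    ← Matrix.linearIndependent_cols_iff_isUnit]
  have hcols : (of fun k j => w ((a ∘ E.symm) j) ⬝ᵥ u k).col = (T ∘ w) ∘ a ∘ E.symm := by
    ext j k
    simp [col, mulVec, T, dotProduct_comm]
  rw [hcols]
  exact hli.comp _ E.symm.injective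

theorem one_le_abs_det_mul_factorial_mul_prod {ι κ α J : Type*} [Fintype ι] [DecidableEq ι]
    [Fintype κ] [DecidableEq κ] [Fintype α]
    {b : ι ⊕ κ → α → ℝ} {c : ι ⊕ κ → α → ℤ} (hc : LinearIndependent ℝ fun l i => (c l i : ℝ))
    {P : Matrix (ι ⊕ κ) (ι ⊕ κ) ℝ} (hP : ∀ l, (fun i => (c l i : ℝ)) = ∑ k, P l k • b k)
    {q : J → α → ℤ} (hq : Submodule.span ℝ (Set.range fun j i => (q j i : ℝ)) = ⊤)
    {Q : ℝ} (hqQ : ∀ j, ‖fun i => (q j i : ℝ)‖ ≤ Q)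
    {β : ι → ℝ} (hβ : ∀ j i, |(fun k => (q j k : ℝ)) ⬝ᵥ b (.inl i)| ≤ β i) :
    1 ≤ |P.det| * ((Fintype.card ι + Fintype.card κ)! *
      ((∏ i, β i) * ∏ k, Q * ∑ i, |b (.inr k) i|)) := by
  obtain ⟨σ, hσ⟩ := exists_det_dotProduct_ne_zero hc hq
  set C : Matrix (ι ⊕ κ) (ι ⊕ κ) ℤ := of fun l j => q (σ j) ⬝ᵥ c l
  set M : Matrix (ι ⊕ κ) (ι ⊕ κ) ℝ := of fun k j => (fun i => (q (σ j) i : ℝ)) ⬝ᵥ b k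
  have hCR : C.map ((↑) : ℤ → ℝ) =
      of fun l j => (fun i => (q (σ j) i : ℝ)) ⬝ᵥ fun i => (c l i : ℝ) := by
    ext l j
    simp [C, dotProduct]
  have hCM : C.map ((↑) : ℤ → ℝ) = P * M := by
    ext l j
    rw [hCR, of_apply, hP, dotProduct_sum, mul_apply]
    simp only [dotProduct_smul, M, of_apply, smul_eq_mul]
  have hC : 1 ≤ |(C.map ((↑) : ℤ → ℝ)).det| := by
    have hC0 : C.det ≠ 0 := fun h0 => hσ (by rw [← hCR, ← Int.cast_det, h0, Int.cast_zero])
    rw [← Int.cast_det, ← Int.cast_abs]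
    exact_mod_cast Int.one_le_abs hC0
  have hr : ∀ k j, |M k j| ≤ Sum.elim β (fun k => Q * ∑ i, |b (.inr k) i|) k := by
    rintro (i | k) j
    · exact hβ _ i
    · exact (abs_dotProduct_le_norm_mul_sum_abs _ _).trans
        (mul_le_mul_of_nonneg_right (hqQ _) (sum_nonneg fun _ _ => abs_nonneg _))
  calc 1 ≤ |(P * M).det| := hCM ▸ hC
    _ = |P.det| * |M.det| := by rw [det_mul, abs_mul]
    _ ≤ _ := by
      gcongr
      simpa [Fintype.prod_sum_type] using abs_det_le_factorial_mul_prod M hr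

theorem prod_rpow_mul_prod_mul {ι κ : Type*} [Fintype ι] [Fintype κ] {Q : ℝ} (hQ : 0 < Q)
    (x : ι → ℝ) (S : κ → ℝ) :
    (∏ i, Q ^ x i) * ∏ k, Q * S k = (∏ k, S k) * Q ^ (Fintype.card κ + ∑ i, x i) := by
  rw [← Real.rpow_sum_of_pos hQ, prod_mul_distrib, prod_const, Finset.card_univ,
    Real.rpow_add hQ, Real.rpow_natCast]
  ring

theorem eventually_mul_rpow_lt_one {f : ℕ → ℝ} {a : ℝ} (ha : a < 0)
    (hf : Tendsto f atTop (nhds a)) {K : ℝ} (hK : 0 ≤ K) :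
    ∀ᶠ Q : ℕ in atTop, K * (Q : ℝ) ^ f Q < 1 := by
  have hlim : Tendsto (fun Q : ℕ => K * (Q : ℝ) ^ (a / 2)) atTop (nhds 0) := by
    simpa using ((tendsto_rpow_neg_atTop (by linarith : 0 < -(a / 2))).comp
      tendsto_natCast_atTop_atTop).const_mul K
  filter_upwards [hf.eventually (gt_mem_nhds (by linarith : a < a / 2)),
    hlim.eventually (gt_mem_nhds one_pos), eventually_ge_atTop 1] with Q hfQ hKQ hQ
  calc K * (Q : ℝ) ^ f Q ≤ K * (Q : ℝ) ^ (a / 2) := by gcongr; exact_mod_cast hQ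
    _ < 1 := hKQ

theorem stmt3_general (m n : ℕ)
    (e : Fin n → Fin m → ℝ) (he : LinearIndependent ℝ e)
    (τ : Fin n → ℝ)
    (ε : ℕ → ℝ) (hε : Tendsto ε atTop (nhds 0))
    (H : {Q : ℕ | 0 < Q ∧ ∃ q : Fin m → (Fin m → ℤ),
      LinearIndependent ℝ (fun j => fun i => ((q j i : ℝ))) ∧
      ∀ j, supZ (q j) ≤ Q ∧
        ∀ i, |∑ k, (q j k : ℝ) * e i k| ≤ (Q : ℝ) ^ (-(τ i) + ε Q)}.Infinite)
    (F : Submodule ℝ (Fin m → ℝ)) (hF : DefinedOverQ F) (heF : ∀ i, e i ∈ F) :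
    (n : ℝ) + ∑ i, τ i ≤ Module.finrank ℝ F := by
  obtain ⟨p, b, hbe⟩ := (LinearIndependent.of_comp F.subtype he :
    LinearIndependent ℝ fun i => (⟨e i, heF i⟩ : F)).exists_basis_sum_fin
  have hd : Module.finrank ℝ F = n + p := by simp [Module.finrank_eq_card_basis b]
  obtain ⟨c, hcF, hc⟩ := hF.exists_intCast_linearIndependent (ι := Fin n ⊕ Fin p) (by simp [hd])
  obtain ⟨P, hP⟩ := b.exists_matrix_eq_sum_smul hcF
  set K := |P.det| * ((n + p)! * ∏ k, ∑ i, |(b (.inr k) : Fin m → ℝ) i|)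
  by_contra hlt
  have hneg : (p : ℝ) + ∑ i, (-τ i + 0) < 0 := by
    rw [hd, Nat.cast_add, not_le] at hlt
    simp only [add_zero, sum_neg_distrib]
    linarith
  have hlim : Tendsto (fun Q => p + ∑ i, (-τ i + ε Q)) atTop (nhds (p + ∑ i, (-τ i + 0))) :=
    tendsto_const_nhds.add (tendsto_finsetSum _ fun i _ => tendsto_const_nhds.add hε)
  obtain ⟨Q, ⟨hQ, q, hq, hqb⟩, hKQ⟩ := ((Nat.frequently_atTop_iff_infinite.2 H).and_eventually
    (eventually_mul_rpow_lt_one hneg hlim (by positivity : 0 ≤ K))).exists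
  have hbound := one_le_abs_det_mul_factorial_mul_prod hc hP
    (hq.span_eq_top_of_card_eq_finrank' (by simp)) (fun j => (hqb j).1)
    (β := fun i => (Q : ℝ) ^ (-τ i + ε Q)) (fun j i => by rw [hbe]; exact (hqb j).2 i)
  rw [prod_rpow_mul_prod_mul (by exact_mod_cast hQ)] at hbound
  simp only [Fintype.card_fin] at hbound
  linarith

theorem stmt3 (m n : ℕ) (hn : 0 < n) (hmn : n < m)
    (e : Fin n → Fin m → ℝ) (he : LinearIndependent ℝ e)
    (τ : Fin n → ℝ) (hτ : ∀ i, 0 < τ i)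
    (ε : ℕ → ℝ) (hε : Tendsto ε atTop (nhds 0))
    (H : {Q : ℕ | 0 < Q ∧ ∃ q : Fin m → (Fin m → ℤ),
      LinearIndependent ℝ (fun j => fun i => ((q j i : ℝ))) ∧
      ∀ j, supZ (q j) ≤ Q ∧
        ∀ i, |∑ k, (q j k : ℝ) * e i k| ≤ (Q : ℝ) ^ (-(τ i) + ε Q)}.Infinite)
    (F : Submodule ℝ (Fin m → ℝ)) (hF : DefinedOverQ F) (heF : ∀ i, e i ∈ F) :
    (n : ℝ) + ∑ i, τ i ≤ Module.finrank ℝ F :=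
  stmt3_general m n e he τ ε hε H F hF heF
end

section
/- For almost every real number ξ (with respect to Lebesgue measure) and every real β > 1, there exist constants c, C > 0 such that for every sufficiently large integer Q there exist two linearly independent vectors q = (q₁, q₂) ∈ ℤ² with max(|q₁|, |q₂|) ≤ C·Q and c·Q^{−1}(log Q)^{−β} ≤ |q₁ξ − q₂| ≤ C·Q^{−1}(log Q)^{β}. -/
/-!
Since `∑ (q (log q)^β)⁻¹` converges for `β > 1`, Borel–Cantelli shows that almost every `ξ`
satisfies `‖qξ‖ ≥ (q (log q)^β)⁻¹` for all large `q`, simultaneously for all `β > 1` (the bound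
is monotone in `β`, so countably many `β` suffice). Fix such an irrational `ξ` and let `a ≤ Q`
minimise `‖aξ‖`. Dirichlet gives `‖aξ‖ ≤ 1/(Q+1)`, so the lower bound at `a` forces
`a (log Q)^β ≥ Q + 1`. Dirichlet with denominators `< a` gives `b < a` with
`‖bξ‖ ≤ 1/a ≤ (log Q)^β / Q`, while `‖bξ‖ ≥ ‖aξ‖ ≥ (Q (log Q)^β)⁻¹` by minimality of `a`.
The vectors `(a, round (aξ))` and `(b, round (bξ))` are independent because
`b ‖aξ‖ < a ‖bξ‖`.
-/

open MeasureTheory Filter Real Set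

lemma one_le_log_of_three_le {x : ℝ} (hx : 3 ≤ x) : 1 ≤ log x := by
  rw [le_log_iff_exp_le (by linarith)]
  linarith [exp_one_lt_three]

lemma inv_mul_log_rpow_anti {β x y : ℝ} (hβ : 0 ≤ β) (hx : 1 < x) (hxy : x ≤ y) :
    (y * log y ^ β)⁻¹ ≤ (x * log x ^ β)⁻¹ := by
  have hlog : 0 < log x := log_pos hx
  have : log x ≤ log y := log_le_log (by linarith) hxy
  gcongr
  linarith

lemma inv_mul_log_rpow_anti_exponent {β β' x : ℝ} (hx : 3 ≤ x) (hβ : β' ≤ β) :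
    (x * log x ^ β)⁻¹ ≤ (x * log x ^ β')⁻¹ := by
  have hlog := one_le_log_of_three_le hx
  gcongr

lemma inv_mul_log_rpow_le_one {β x : ℝ} (hβ : 0 ≤ β) (hx : 3 ≤ x) : (x * log x ^ β)⁻¹ ≤ 1 := by
  have : 1 ≤ log x ^ β := one_le_rpow (one_le_log_of_three_le hx) hβ
  exact inv_le_one_of_one_le₀ (by nlinarith)

lemma summable_inv_mul_log_rpow {β : ℝ} (hβ : 1 < β) :
    Summable fun n : ℕ => ((n : ℝ) * log n ^ β)⁻¹ := by
  set f : ℕ → ℝ := fun n => ((n : ℝ) * log n ^ β)⁻¹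
  have hf_anti : ∀ m n : ℕ, 2 ≤ m → m ≤ n → f n ≤ f m := fun m n hm hmn =>
    inv_mul_log_rpow_anti (by linarith) (by exact_mod_cast hm) (by exact_mod_cast hmn)
  have hf_two_pow : ∀ k : ℕ, (2 : ℝ) ^ (k + 1) * f (2 ^ (k + 1)) =
      (log 2 ^ β)⁻¹ * ((k + 1 : ℕ) : ℝ) ^ (-β) := by
    intro k
    simp only [f, Nat.cast_pow, Nat.cast_ofNat, Real.log_pow]
    rw [mul_rpow (by positivity) (log_pos one_lt_two).le, rpow_neg (by positivity)]
    have : (0 : ℝ) < 2 ^ (k + 1) := by positivity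
    field_simp
  rw [← summable_nat_add_iff 1, ← summable_condensed_iff_of_nonneg (fun n => by positivity)
    (fun m n hm hmn => hf_anti _ _ (by omega) (by omega)), ← summable_nat_add_iff 1]
  refine .of_nonneg_of_le (fun k => by positivity) (fun k => ?_)
    (((summable_nat_add_iff 1).2 (summable_nat_rpow.2 (neg_lt_neg hβ))).mul_left (log 2 ^ β)⁻¹)
  rw [← hf_two_pow]
  gcongr
  exact hf_anti _ _ (Nat.le_self_pow (by omega) 2) (Nat.le_succ _)

lemma volume_setOf_abs_mul_sub_lt_le (m : ℤ) {q : ℕ} (hq : 0 < q) {ε : ℝ} (hε₀ : 0 ≤ ε)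
    (hε₁ : ε ≤ 1) :
    volume {ξ ∈ Ico (m : ℝ) (m + 1) | ∃ p : ℤ, |(q : ℝ) * ξ - p| < ε} ≤ ENNReal.ofReal (4 * ε) := by
  have hq' : (0 : ℝ) < q := by exact_mod_cast hq
  have hcover : {ξ ∈ Ico (m : ℝ) (m + 1) | ∃ p : ℤ, |(q : ℝ) * ξ - p| < ε} ⊆
      ⋃ p ∈ Finset.Icc (m * q) (m * q + q), Metric.ball ((p : ℝ) / q) (ε / q) := by
    rintro ξ ⟨⟨hmξ, hξm⟩, p, hp⟩
    have hp' := abs_lt.1 hp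
    have hp₁ : m * q - 1 < p := by
      have : ((m * q - 1 : ℤ) : ℝ) < p := by push_cast; nlinarith [hp'.1, hp'.2]
      exact_mod_cast this
    have hp₂ : p < m * q + q + 1 := by
      have : (p : ℝ) < ((m * q + q + 1 : ℤ) : ℝ) := by push_cast; nlinarith [hp'.1, hp'.2]
      exact_mod_cast this
    simp only [mem_iUnion, Finset.mem_Icc, Metric.mem_ball, Real.dist_eq]
    refine ⟨p, ⟨by omega, by omega⟩, ?_⟩
    calc |ξ - p / q| = |(q : ℝ) * ξ - p| / q := by
          rw [← abs_of_pos hq', ← abs_div, abs_of_pos hq', sub_div, mul_div_cancel_left₀ _ hq'.ne']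
      _ < ε / q := by gcongr
  calc volume {ξ ∈ Ico (m : ℝ) (m + 1) | ∃ p : ℤ, |(q : ℝ) * ξ - p| < ε}
      ≤ ∑ p ∈ Finset.Icc (m * q) (m * q + q), volume (Metric.ball ((p : ℝ) / q) (ε / q)) :=
        (measure_mono hcover).trans (measure_biUnion_finset_le _ _)
    _ = ENNReal.ofReal (((q + 1 : ℕ) : ℝ) * (2 * (ε / q))) := by
        have hcard : (m * q + q + 1 - m * q).toNat = q + 1 := by omega
        simp only [Real.volume_ball, Finset.sum_const, Int.card_Icc, hcard, nsmul_eq_mul]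
        rw [ENNReal.ofReal_mul (Nat.cast_nonneg _), ENNReal.ofReal_natCast]
    _ ≤ ENNReal.ofReal (4 * ε) := by
        apply ENNReal.ofReal_le_ofReal
        rw [show ((q + 1 : ℕ) : ℝ) * (2 * (ε / q)) = 2 * ε * (q + 1) / q by push_cast; ring,
          div_le_iff₀ hq']
        have : (1 : ℝ) ≤ q := by exact_mod_cast hq
        nlinarith

lemma ae_eventually_inv_mul_log_rpow_le_abs_mul_sub {β : ℝ} (hβ : 1 < β) :
    ∀ᵐ ξ ∂(volume : Measure ℝ), ∀ᶠ q : ℕ in atTop, ∀ p : ℤ,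
      ((q : ℝ) * log q ^ β)⁻¹ ≤ |(q : ℝ) * ξ - p| := by
  suffices h : ∀ m : ℤ, ∀ᵐ ξ ∂(volume : Measure ℝ), ξ ∈ Ico (m : ℝ) (m + 1) →
      ∀ᶠ q : ℕ in atTop, ∀ p : ℤ, ((q : ℝ) * log q ^ β)⁻¹ ≤ |(q : ℝ) * ξ - p| by
    have h' : ∀ᵐ ξ ∂(volume : Measure ℝ), ∀ m : ℤ, ξ ∈ Ico (m : ℝ) (m + 1) →
        ∀ᶠ q : ℕ in atTop, ∀ p : ℤ, ((q : ℝ) * log q ^ β)⁻¹ ≤ |(q : ℝ) * ξ - p| := ae_all_iff.2 h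
    filter_upwards [h'] with ξ hξ
    exact hξ ⌊ξ⌋ ⟨Int.floor_le ξ, Int.lt_floor_add_one ξ⟩
  intro m
  set s : ℕ → Set ℝ := fun q =>
    {ξ ∈ Ico (m : ℝ) (m + 1) | 3 ≤ q ∧ ∃ p : ℤ, |(q : ℝ) * ξ - p| < ((q : ℝ) * log q ^ β)⁻¹}
  have hs : ∀ q, volume (s q) ≤ ENNReal.ofReal (4 * ((q : ℝ) * log q ^ β)⁻¹) := by
    intro q
    by_cases hq : 3 ≤ q
    · simp only [s, hq, true_and]
      exact volume_setOf_abs_mul_sub_lt_le m (by omega) (by positivity)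
        (inv_mul_log_rpow_le_one (by linarith) (by exact_mod_cast hq))
    · simp [s, hq]
  have hsum : ∑' q, volume (s q) ≠ ⊤ := by
    refine ne_top_of_le_ne_top ?_ (ENNReal.tsum_le_tsum hs)
    rw [← ENNReal.ofReal_tsum_of_nonneg (fun q => by positivity)
      ((summable_inv_mul_log_rpow hβ).mul_left 4)]
    exact ENNReal.ofReal_ne_top
  filter_upwards [ae_eventually_notMem hsum] with ξ hξ hmem
  filter_upwards [hξ, eventually_ge_atTop 3] with q hq hq3 p
  by_contra! h
  exact hq ⟨hmem, hq3, p, h⟩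

lemma ae_forall_eventually_inv_mul_log_rpow_le_abs_mul_sub :
    ∀ᵐ ξ ∂(volume : Measure ℝ), ∀ β : ℝ, 1 < β → ∀ᶠ q : ℕ in atTop, ∀ p : ℤ,
      ((q : ℝ) * log q ^ β)⁻¹ ≤ |(q : ℝ) * ξ - p| := by
  have h : ∀ᵐ ξ ∂(volume : Measure ℝ), ∀ k : ℕ, ∀ᶠ q : ℕ in atTop, ∀ p : ℤ,
      ((q : ℝ) * log q ^ (1 + 1 / (k + 1) : ℝ))⁻¹ ≤ |(q : ℝ) * ξ - p| := ae_all_iff.2 fun k =>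
    ae_eventually_inv_mul_log_rpow_le_abs_mul_sub (β := 1 + 1 / (k + 1))
      (lt_add_of_pos_right 1 (by positivity))
  filter_upwards [h] with ξ hξ β hβ
  obtain ⟨k, hk⟩ := exists_nat_one_div_lt (sub_pos.2 hβ)
  filter_upwards [hξ k, eventually_ge_atTop 3] with q hq hq3 p
  exact (inv_mul_log_rpow_anti_exponent (by exact_mod_cast hq3) (by linarith)).trans (hq p)

lemma Irrational.abs_natCast_mul_sub_round_pos {ξ : ℝ} (hξ : Irrational ξ) {q : ℕ} (hq : q ≠ 0) :
    0 < |(q : ℝ) * ξ - round ((q : ℝ) * ξ)| :=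
  abs_pos.2 (sub_ne_zero.2 ((hξ.natCast_mul hq).ne_int _))

lemma exists_best_approx (ξ : ℝ) {Q : ℕ} (hQ : 0 < Q) :
    ∃ a ∈ Finset.Icc 1 Q, |(a : ℝ) * ξ - round ((a : ℝ) * ξ)| ≤ 1 / (Q + 1) ∧
      ∀ b ∈ Finset.Icc 1 Q,
        |(a : ℝ) * ξ - round ((a : ℝ) * ξ)| ≤ |(b : ℝ) * ξ - round ((b : ℝ) * ξ)| := by
  obtain ⟨a, ha, hmin⟩ := Finset.exists_min_image (Finset.Icc 1 Q)
    (fun b : ℕ => |(b : ℝ) * ξ - round ((b : ℝ) * ξ)|) ⟨1, Finset.mem_Icc.2 ⟨le_rfl, hQ⟩⟩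
  obtain ⟨k, hk₀, hkQ, hk⟩ := Real.exists_nat_abs_mul_sub_round_le ξ hQ
  exact ⟨a, ha, (hmin k (Finset.mem_Icc.2 ⟨hk₀, hkQ⟩)).trans hk, hmin⟩

lemma mul_sub_mul_ne_zero_of_mul_abs_lt {ξ : ℝ} {a b : ℕ} {p r : ℤ}
    (h : (b : ℝ) * |a * ξ - p| < a * |b * ξ - r|) : (a : ℤ) * r - p * b ≠ 0 := by
  intro hdet
  have hreal : (a : ℝ) * (b * ξ - r) = b * (a * ξ - p) := by
    have := congrArg (Int.cast : ℤ → ℝ) hdet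
    push_cast at this
    linear_combination -this
  have := congrArg abs hreal
  simp only [abs_mul, Nat.abs_cast] at this
  exact h.ne' this

lemma eventually_exists_best_approx_pair {ξ : ℝ} (hξ : Irrational ξ) {β : ℝ} (hβ : 0 ≤ β)
    (H : ∀ᶠ q : ℕ in atTop, ∀ p : ℤ, ((q : ℝ) * log q ^ β)⁻¹ ≤ |(q : ℝ) * ξ - p|) :
    ∀ᶠ Q : ℕ in atTop, ∃ a b : ℕ, 0 < b ∧ b < a ∧ a ≤ Q ∧
      ((Q : ℝ) * log Q ^ β)⁻¹ ≤ |(a : ℝ) * ξ - round ((a : ℝ) * ξ)| ∧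
      |(a : ℝ) * ξ - round ((a : ℝ) * ξ)| ≤ |(b : ℝ) * ξ - round ((b : ℝ) * ξ)| ∧
      |(a : ℝ) * ξ - round ((a : ℝ) * ξ)| ≤ (Q : ℝ)⁻¹ * log Q ^ β ∧
      |(b : ℝ) * ξ - round ((b : ℝ) * ξ)| ≤ (Q : ℝ)⁻¹ * log Q ^ β := by
  obtain ⟨q₀, hq₀⟩ := eventually_atTop.1 H
  -- Small denominators stay a fixed distance from the integers, so eventually lose to Dirichlet.
  have hsmall : ∀ᶠ Q : ℕ in atTop, ∀ q ∈ Finset.range (max q₀ 2), q ≠ 0 →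
      1 / ((Q : ℝ) + 1) < |(q : ℝ) * ξ - round ((q : ℝ) * ξ)| := by
    refine (Finset.eventually_all _).2 fun q _ => ?_
    by_cases hq : q = 0
    · exact Eventually.of_forall fun _ h => absurd hq h
    · filter_upwards [tendsto_one_div_add_atTop_nhds_zero_nat.eventually
        (gt_mem_nhds (hξ.abs_natCast_mul_sub_round_pos hq))] with Q hQ _ using hQ
  filter_upwards [hsmall, eventually_ge_atTop 3] with Q hsmallQ hQ
  have hQ₃ : (3 : ℝ) ≤ Q := by exact_mod_cast hQ
  have hlogQ : 1 ≤ log Q ^ β := one_le_rpow (one_le_log_of_three_le hQ₃) hβ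
  obtain ⟨a, ha, haQ, hmin⟩ := exists_best_approx ξ (by omega : 0 < Q)
  obtain ⟨ha₁, haQ'⟩ := Finset.mem_Icc.1 ha
  have ha₀ : max q₀ 2 ≤ a := by
    by_contra! h
    exact (hsmallQ a (Finset.mem_range.2 h) (by omega)).not_ge haQ
  have ha₂ : (1 : ℝ) < a := by exact_mod_cast (by omega : 1 < a)
  have haQR : (a : ℝ) ≤ Q := by exact_mod_cast haQ'
  have hlow : ((Q : ℝ) * log Q ^ β)⁻¹ ≤ |(a : ℝ) * ξ - round ((a : ℝ) * ξ)| :=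
    (inv_mul_log_rpow_anti hβ ha₂ haQR).trans (hq₀ a (le_of_max_le_left ha₀) _)
  -- The lower bound at `a` forces `a` to be large, which is what makes `1 / a` small.
  have hQa : (Q : ℝ) + 1 ≤ a * log Q ^ β := by
    have h := (hq₀ a (le_of_max_le_left ha₀) (round ((a : ℝ) * ξ))).trans haQ
    have hloga := log_pos ha₂
    rw [one_div, inv_le_inv₀ (mul_pos (by linarith) (rpow_pos_of_pos hloga _)) (by positivity)] at h
    have : log a ^ β ≤ log Q ^ β := by
      have := hloga.le
      gcongr
    nlinarith
  obtain ⟨b, hb₀, hba, hb⟩ := Real.exists_nat_abs_mul_sub_round_le ξ (n := a - 1) (by omega)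
  rw [Nat.cast_pred (by omega), sub_add_cancel] at hb
  refine ⟨a, b, hb₀, by omega, haQ', hlow, hmin b (Finset.mem_Icc.2 ⟨hb₀, by omega⟩), ?_, ?_⟩
  · calc |(a : ℝ) * ξ - round ((a : ℝ) * ξ)| ≤ 1 / (Q + 1) := haQ
      _ ≤ 1 / Q := by gcongr; linarith
      _ ≤ (Q : ℝ)⁻¹ * log Q ^ β := by
        rw [one_div]
        exact le_mul_of_one_le_right (by positivity) hlogQ
  · calc |(b : ℝ) * ξ - round ((b : ℝ) * ξ)| ≤ 1 / a := hb
      _ ≤ log Q ^ β / (Q + 1) := by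
        rw [div_le_div_iff₀ (by linarith) (by linarith)]; linarith
      _ ≤ (Q : ℝ)⁻¹ * log Q ^ β := by
        rw [inv_mul_eq_div]; gcongr; linarith

lemma abs_round_le_abs_add (x : ℝ) : |(round x : ℝ)| ≤ |x| + 1 / 2 := by
  linarith [abs_sub_abs_le_abs_sub (round x : ℝ) x, abs_sub_comm (round x : ℝ) x, abs_sub_round x]

lemma height_and_approx_bounds {ξ β : ℝ} {a Q : ℕ} (ha : 0 < a) (haQ : a ≤ Q)
    (hlow : ((Q : ℝ) * log Q ^ β)⁻¹ ≤ |(a : ℝ) * ξ - round ((a : ℝ) * ξ)|)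
    (hup : |(a : ℝ) * ξ - round ((a : ℝ) * ξ)| ≤ (Q : ℝ)⁻¹ * log Q ^ β) :
    max |((a : ℤ) : ℝ)| |((round ((a : ℝ) * ξ) : ℤ) : ℝ)| ≤ (|ξ| + 1) * Q ∧
      1 * (Q : ℝ)⁻¹ * log Q ^ (-β) ≤ |((a : ℤ) : ℝ) * ξ - round ((a : ℝ) * ξ)| ∧
      |((a : ℤ) : ℝ) * ξ - round ((a : ℝ) * ξ)| ≤ (|ξ| + 1) * (Q : ℝ)⁻¹ * log Q ^ β := by
  have ha₁ : (1 : ℝ) ≤ a := by exact_mod_cast ha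
  have haQR : (a : ℝ) ≤ Q := by exact_mod_cast haQ
  have hξ := abs_nonneg ξ
  simp only [Int.cast_natCast]
  refine ⟨max_le ?_ ?_, ?_, ?_⟩
  · rw [Nat.abs_cast]
    nlinarith
  · calc |(round ((a : ℝ) * ξ) : ℝ)| ≤ |(a : ℝ) * ξ| + 1 / 2 := abs_round_le_abs_add _
      _ ≤ (|ξ| + 1) * Q := by
        rw [abs_mul, Nat.abs_cast]
        nlinarith
  · rwa [one_mul, rpow_neg (log_natCast_nonneg Q), ← mul_inv]
  · rw [mul_assoc]
    exact hup.trans (le_mul_of_one_le_left (by positivity) (by linarith))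

theorem stmt7 :
    ∀ᵐ ξ ∂(volume : Measure ℝ), ∀ β : ℝ, 1 < β →
      ∃ c > (0:ℝ), ∃ C > (0:ℝ), ∃ Q₀ : ℕ, ∀ Q : ℕ, Q₀ ≤ Q →
        ∃ q q' : ℤ × ℤ,
          (q.1 * q'.2 - q.2 * q'.1 ≠ 0) ∧
          (max |(q.1 : ℝ)| |(q.2 : ℝ)| ≤ C * Q ∧
            c * (Q : ℝ)⁻¹ * Real.log Q ^ (-β) ≤ |(q.1 : ℝ) * ξ - (q.2 : ℝ)| ∧
            |(q.1 : ℝ) * ξ - (q.2 : ℝ)| ≤ C * (Q : ℝ)⁻¹ * Real.log Q ^ β) ∧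
          (max |(q'.1 : ℝ)| |(q'.2 : ℝ)| ≤ C * Q ∧
            c * (Q : ℝ)⁻¹ * Real.log Q ^ (-β) ≤ |(q'.1 : ℝ) * ξ - (q'.2 : ℝ)| ∧
            |(q'.1 : ℝ) * ξ - (q'.2 : ℝ)| ≤ C * (Q : ℝ)⁻¹ * Real.log Q ^ β) := by
  filter_upwards [(countable_range ((↑) : ℚ → ℝ)).ae_notMem volume,
    ae_forall_eventually_inv_mul_log_rpow_le_abs_mul_sub] with ξ hξ H β hβ
  obtain ⟨Q₀, hQ₀⟩ :=
    eventually_atTop.1 (eventually_exists_best_approx_pair hξ (by linarith) (H β hβ))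
  refine ⟨1, one_pos, |ξ| + 1, by positivity, Q₀, fun Q hQ => ?_⟩
  obtain ⟨a, b, hb, hba, haQ, hlow, hab, hupa, hupb⟩ := hQ₀ Q hQ
  refine ⟨(a, round ((a : ℝ) * ξ)), (b, round ((b : ℝ) * ξ)), ?_,
    height_and_approx_bounds (hb.trans hba) haQ hlow hupa,
    height_and_approx_bounds hb (hba.le.trans haQ) (hlow.trans hab) hupb⟩
  refine mul_sub_mul_ne_zero_of_mul_abs_lt (ξ := ξ) ?_
  have ha := Irrational.abs_natCast_mul_sub_round_pos hξ (q := a) (by omega)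
  calc (b : ℝ) * |(a : ℝ) * ξ - round ((a : ℝ) * ξ)|
      < a * |(a : ℝ) * ξ - round ((a : ℝ) * ξ)| := by gcongr
    _ ≤ a * |(b : ℝ) * ξ - round ((b : ℝ) * ξ)| := by gcongr
end

section
/- For almost every ξ ∈ ℝ^m (with respect to Lebesgue measure, m ≥ 2) and every ε > 0, for all sufficiently large integers Q there exists a nonzero integer vector q ∈ ℤ^m with ‖q‖ ≤ Q and Q^{−(m−1)−ε} ≤ |q · ξ| ≤ Q^{−(m−1)+ε}. Consequently, the Diophantine exponent of ξ (the supremum of τ > 0 such that for all sufficiently large Q there exists a nonzero q ∈ ℤ^m with ‖q‖ ≤ Q and |q·ξ| = Q^{−τ+o(1)}) equals m − 1 for almost all ξ ∈ ℝ^m. -/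
/-! For every `ξ`, Dirichlet's pigeonhole argument applied to the `(Q + 1)^m` values `a · ξ`,
`a ∈ {0, …, Q}^m`, gives a nonzero `q` with `‖q‖ ≤ Q` and `|q · ξ| ≪ Q^(1-m)`.

Conversely, inside the cube `‖ξ‖ ≤ N` the slab `|q · ξ| ≤ ‖q‖^s` has volume `≪ ‖q‖^(s-1)`,
which is summable over `ℤ^m` when `s < 1 - m`. By Borel–Cantelli, for almost every `ξ` only
finitely many `q ≠ 0` satisfy `|q · ξ| ≤ ‖q‖^(-(m-1)-ε)`. Then `q · ξ ≠ 0` for every `q ≠ 0`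
(otherwise all multiples of `q` would be exceptions), so the finitely many exceptions are
bounded below, and `|q · ξ| ≥ Q^(-(m-1)-ε)` whenever `‖q‖ ≤ Q` and `Q` is large.

Together these give the two-sided bound; choosing `ε` along a diagonal `ε(Q) → 0` shows that
`m - 1` belongs to the set defining the exponent, and the lower bound rules out any larger `τ`. -/

open MeasureTheory Filter

theorem exists_abs_eq_norm {ι : Type*} [Fintype ι] [Nonempty ι] (a : ι → ℝ) :
    ∃ j, |a j| = ‖a‖ := by
  obtain ⟨j, -, hj⟩ := Finset.univ.exists_mem_eq_sup Finset.univ_nonempty fun i => ‖a i‖₊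
  exact ⟨j, by rw [Pi.norm_def, hj]; simp⟩

theorem exists_ne_abs_sub_mul_lt_of_card_lt {α : Type*} [Fintype α] (f : α → ℝ) {a L : ℝ}
    {N : ℕ} (hN : 0 < N) (hcard : N < Fintype.card α) (hf : ∀ x, f x ∈ Set.Ico a (a + L)) :
    ∃ x y, x ≠ y ∧ |f x - f y| * N < L := by
  obtain ⟨x₀⟩ : Nonempty α := Fintype.card_pos_iff.1 (hN.trans hcard)
  have hL : 0 < L := by linarith [(hf x₀).1, (hf x₀).2]
  have hbox : Set.MapsTo (fun x => ⌊(f x - a) / L * N⌋) (Finset.univ : Finset α)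
      (Finset.Ico (0 : ℤ) N) := by
    intro x _
    have hx : 0 ≤ (f x - a) / L ∧ (f x - a) / L < 1 := by
      rw [div_lt_one hL]; exact ⟨div_nonneg (by linarith [(hf x).1]) hL.le, by linarith [(hf x).2]⟩
    simp only [Finset.coe_Ico, Set.mem_Ico, Int.floor_nonneg, Int.floor_lt, Int.cast_natCast]
    exact ⟨mul_nonneg hx.1 N.cast_nonneg, mul_lt_of_lt_one_left (by exact_mod_cast hN) hx.2⟩
  obtain ⟨x, -, y, -, hxy, hfloor⟩ :=
    Finset.exists_ne_map_eq_of_card_lt_of_maps_to (by simpa using hcard) hbox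
  refine ⟨x, y, hxy, ?_⟩
  have := Int.abs_sub_lt_one_of_floor_eq_floor hfloor
  rwa [← sub_mul, div_sub_div_same, sub_sub_sub_cancel_right, abs_mul, abs_div, abs_of_pos hL,
    Nat.abs_cast, div_mul_eq_mul_div, div_lt_one hL] at this

theorem volume_setOf_abs_dotProduct_le_le {ι : Type*} [Fintype ι] (a : ι → ℝ) {j : ι}
    (hj : a j ≠ 0) (δ N : ℝ) :
    volume {ξ : ι → ℝ | |a ⬝ᵥ ξ| ≤ δ ∧ ∀ i, |ξ i| ≤ N}
      ≤ ENNReal.ofReal (2 * δ / |a j|) * ENNReal.ofReal (2 * N) ^ (Fintype.card ι - 1) := by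
  classical
  set M : Matrix ι ι ℝ := (1 : Matrix ι ι ℝ).updateRow j a
  have hdet : LinearMap.det (Matrix.toLin' M) = a j := by
    have hrow : ∑ k, a k • (1 : Matrix ι ι ℝ) k = a := by
      ext i; simp [Matrix.one_apply]
    have := Matrix.det_updateRow_sum (1 : Matrix ι ι ℝ) j a
    rw [hrow] at this
    rw [LinearMap.det_toLin', this]; simp
  have hM : ∀ ξ, Matrix.toLin' M ξ = Function.update ξ j (a ⬝ᵥ ξ) := fun ξ => by
    simp [M, Matrix.updateRow_mulVec]
  have hsub : {ξ : ι → ℝ | |a ⬝ᵥ ξ| ≤ δ ∧ ∀ i, |ξ i| ≤ N} ⊆ Matrix.toLin' M ⁻¹'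
      Set.univ.pi (Function.update (fun _ => Set.Icc (-N) N) j (Set.Icc (-δ) δ)) := by
    rintro ξ ⟨hdot, hbox⟩
    simp only [Set.mem_preimage, Set.mem_univ_pi, hM]
    intro i
    rcases eq_or_ne i j with rfl | hij
    · simpa [abs_le] using hdot
    · simpa [hij, abs_le] using hbox i
  refine (measure_mono hsub).trans (le_of_eq ?_)
  rw [Measure.addHaar_preimage_linearMap _ (hdet ▸ hj), hdet, volume_pi_pi,
    ← Finset.mul_prod_erase _ _ (Finset.mem_univ j),
    Finset.prod_congr rfl fun i hi => by rw [Function.update_of_ne (Finset.ne_of_mem_erase hi)],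
    Finset.prod_const, Finset.card_erase_of_mem (Finset.mem_univ j), Finset.card_univ,
    Function.update_self, Real.volume_Icc, Real.volume_Icc, ← mul_assoc,
    ← ENNReal.ofReal_mul (abs_nonneg _), abs_inv, sub_neg_eq_add, sub_neg_eq_add, ← two_mul,
    ← two_mul, inv_mul_eq_div]

theorem exists_tendsto_zero_eventually (P : ℝ → ℕ → Prop) (h : ∀ e > 0, ∀ᶠ Q in atTop, P e Q) :
    ∃ ε : ℕ → ℝ, Tendsto ε atTop (nhds 0) ∧ ∀ᶠ Q in atTop, P (ε Q) Q := by
  classical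
  let k : ℕ → ℕ := fun Q => Nat.findGreatest (fun k => P (1 / ((k : ℝ) + 1)) Q) Q
  have hk : Tendsto k atTop atTop := tendsto_atTop.2 fun K => by
    filter_upwards [h _ (Nat.one_div_pos_of_nat (n := K)), eventually_ge_atTop K] with Q hP hKQ
    exact Nat.le_findGreatest hKQ hP
  refine ⟨fun Q => 1 / ((k Q : ℝ) + 1), tendsto_one_div_add_atTop_nhds_zero_nat.comp hk, ?_⟩
  filter_upwards [h 1 one_pos] with Q hP
  exact Nat.findGreatest_spec (P := fun k => P (1 / ((k : ℝ) + 1)) Q) (Nat.zero_le Q)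
    (by simpa using hP)

theorem supZ_nonneg {m : ℕ} (q : Fin m → ℤ) : 0 ≤ supZ q :=
  norm_nonneg _

theorem supZ_pos {m : ℕ} {q : Fin m → ℤ} (hq : q ≠ 0) : 0 < supZ q := by
  refine norm_pos_iff.2 fun h => hq (funext fun i => ?_)
  simpa using congrFun h i

theorem summable_supZ_rpow {m : ℕ} {r : ℝ} (hr : r < -m) :
    Summable fun q : Fin m → ℤ => supZ q ^ r := by
  set L := Submodule.span ℤ (Set.range (Pi.basisFun ℝ (Fin m)))
  have hrank : Module.finrank ℤ L = m := by
    rw [ZLattice.rank ℝ]; simp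
  have hsum := ZLattice.summable_norm_rpow L r (by rwa [hrank])
  have hL : ∀ q : Fin m → ℤ, (fun i => (q i : ℝ)) ∈ L := fun q =>
    ((Pi.basisFun ℝ (Fin m)).mem_span_iff_repr_mem ℤ _).2 fun i => ⟨q i, by simp⟩
  let e : (Fin m → ℤ) → L := fun q => ⟨_, hL q⟩
  have hinj : Function.Injective e := fun q q' h => by
    ext i; simpa [e] using congrFun (congrArg Subtype.val h) i
  exact (hsum.comp_injective hinj).congr fun _ => rfl

theorem volume_setOf_abs_sum_le_supZ_rpow_le {m : ℕ} (s N : ℝ) (q : Fin m → ℤ) :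
    volume {ξ : Fin m → ℝ | q ≠ 0 ∧ |∑ i, (q i : ℝ) * ξ i| ≤ supZ q ^ s ∧ ∀ i, |ξ i| ≤ N}
      ≤ ENNReal.ofReal (2 * supZ q ^ (s - 1)) * ENNReal.ofReal (2 * N) ^ (m - 1) := by
  rcases eq_or_ne q 0 with rfl | hq
  · simp
  obtain ⟨i, hi⟩ : ∃ i, q i ≠ 0 := Function.ne_iff.1 hq
  have : Nonempty (Fin m) := ⟨i⟩
  obtain ⟨j, hj⟩ := exists_abs_eq_norm fun i => (q i : ℝ)
  have hqj : (q j : ℝ) ≠ 0 := abs_pos.1 (hj ▸ supZ_pos hq)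
  calc _ ≤ volume {ξ : Fin m → ℝ |
          |(fun i : Fin m => (q i : ℝ)) ⬝ᵥ ξ| ≤ supZ q ^ s ∧ ∀ i, |ξ i| ≤ N} :=
        measure_mono fun ξ h => h.2
    _ ≤ _ := volume_setOf_abs_dotProduct_le_le (fun i => (q i : ℝ)) hqj _ _
    _ = _ := by
      rw [hj, Fintype.card_fin, ← supZ, Real.rpow_sub_one (supZ_pos hq).ne', mul_div_assoc]

theorem ae_finite_setOf_abs_sum_le_supZ_rpow {m : ℕ} {s : ℝ} (hs : s < 1 - m) :
    ∀ᵐ ξ ∂(volume : Measure (Fin m → ℝ)),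
      {q : Fin m → ℤ | q ≠ 0 ∧ |∑ i, (q i : ℝ) * ξ i| ≤ supZ q ^ s}.Finite := by
  have hbox : ∀ N : ℕ, ∀ᵐ ξ ∂(volume : Measure (Fin m → ℝ)),
      {q : Fin m → ℤ | q ≠ 0 ∧ |∑ i, (q i : ℝ) * ξ i| ≤ supZ q ^ s ∧
        ∀ i, |ξ i| ≤ (N : ℝ)}.Finite := by
    intro N
    refine ae_finite_setOfPred_mem (ne_top_of_le_ne_top ?_
      (ENNReal.tsum_le_tsum fun q => volume_setOf_abs_sum_le_supZ_rpow_le s N q))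
    rw [ENNReal.tsum_mul_right, ← ENNReal.ofReal_tsum_of_nonneg
      (fun q => mul_nonneg zero_le_two (Real.rpow_nonneg (supZ_nonneg q) _))
      ((summable_supZ_rpow (m := m) (r := s - 1) (by linarith)).mul_left 2)]
    exact ENNReal.mul_ne_top ENNReal.ofReal_ne_top (ENNReal.pow_ne_top ENNReal.ofReal_ne_top)
  filter_upwards [ae_all_iff.2 hbox] with ξ hξ
  obtain ⟨N, hN⟩ := exists_nat_ge ‖ξ‖
  refine (hξ N).subset fun q hq => ⟨hq.1, hq.2, fun i => ?_⟩
  exact ((Real.norm_eq_abs _).symm.trans_le (norm_le_pi_norm ξ i)).trans hN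

theorem sum_mul_ne_zero_of_finite {m : ℕ} {s : ℝ} {ξ : Fin m → ℝ}
    (hfin : {q : Fin m → ℤ | q ≠ 0 ∧ |∑ i, (q i : ℝ) * ξ i| ≤ supZ q ^ s}.Finite)
    {q : Fin m → ℤ} (hq : q ≠ 0) : ∑ i, (q i : ℝ) * ξ i ≠ 0 := by
  intro h0
  have hinj : Function.Injective fun k : ℕ => ((k : ℤ) + 1) • q :=
    (smul_left_injective ℤ hq).comp fun k k' h => by simpa using h
  refine Set.infinite_of_injective_forall_mem (s := {q : Fin m → ℤ | q ≠ 0 ∧ _}) hinj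
    (fun k => ⟨smul_ne_zero (by positivity) hq, ?_⟩) hfin
  simp only [Pi.smul_apply, smul_eq_mul, Int.cast_mul, mul_assoc, ← Finset.mul_sum, h0,
    mul_zero, abs_zero]
  exact Real.rpow_nonneg (supZ_nonneg _) _

theorem eventually_rpow_le_abs_sum_of_finite {m : ℕ} {s : ℝ} (hs : s < 0) {ξ : Fin m → ℝ}
    (hfin : {q : Fin m → ℤ | q ≠ 0 ∧ |∑ i, (q i : ℝ) * ξ i| ≤ supZ q ^ s}.Finite) :
    ∀ᶠ Q : ℕ in atTop, ∀ q : Fin m → ℤ, q ≠ 0 → supZ q ≤ Q →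
      (Q : ℝ) ^ s ≤ |∑ i, (q i : ℝ) * ξ i| := by
  have htend : Tendsto (fun Q : ℕ => (Q : ℝ) ^ s) atTop (nhds 0) := by
    simpa [Function.comp_def] using
      (tendsto_rpow_neg_atTop (neg_pos.2 hs)).comp tendsto_natCast_atTop_atTop
  filter_upwards [hfin.eventually_all.2 fun q hq =>
    htend.eventually_lt_const (abs_pos.2 (sum_mul_ne_zero_of_finite hfin hq.1))]
    with Q hQ q hq hqQ
  by_cases hF : q ∈ {q : Fin m → ℤ | q ≠ 0 ∧ |∑ i, (q i : ℝ) * ξ i| ≤ supZ q ^ s}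
  · exact (hQ q hF).le
  · have hlt : supZ q ^ s < |∑ i, (q i : ℝ) * ξ i| := lt_of_not_ge fun h => hF ⟨hq, h⟩
    exact (Real.rpow_le_rpow_of_nonpos (supZ_pos hq) hqQ hs.le).trans hlt.le

theorem ae_eventually_rpow_le_abs_sum {m : ℕ} (hm : m ≠ 0) :
    ∀ᵐ ξ ∂(volume : Measure (Fin m → ℝ)), ∀ ε > (0 : ℝ), ∀ᶠ Q : ℕ in atTop,
      ∀ q : Fin m → ℤ, q ≠ 0 → supZ q ≤ Q →
        (Q : ℝ) ^ (-((m : ℝ) - 1) - ε) ≤ |∑ i, (q i : ℝ) * ξ i| := by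
  have hm1 : (1 : ℝ) ≤ m := by exact_mod_cast Nat.one_le_iff_ne_zero.2 hm
  have hk : ∀ k : ℕ, (0 : ℝ) < 1 / (k + 1) := fun k => by positivity
  filter_upwards [ae_all_iff.2 fun k : ℕ =>
    ae_finite_setOf_abs_sum_le_supZ_rpow (m := m) (s := -((m : ℝ) - 1) - 1 / (k + 1))
      (by linarith [hk k])] with ξ hξ ε hε
  obtain ⟨k, hkε⟩ := exists_nat_one_div_lt hε
  filter_upwards [eventually_rpow_le_abs_sum_of_finite (by linarith [hk k]) (hξ k),
    eventually_ge_atTop 1] with Q hQ hQ1 q hq hqQ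
  exact (Real.rpow_le_rpow_of_exponent_le (by exact_mod_cast hQ1) (by linarith)).trans
    (hQ q hq hqQ)

theorem exists_ne_zero_supZ_le_abs_sum_mul_lt {m : ℕ} (ξ : Fin m → ℝ) (hm : m ≠ 0) {Q : ℕ}
    (hQ : 0 < Q) : ∃ q : Fin m → ℤ, q ≠ 0 ∧ supZ q ≤ Q ∧
      |∑ i, (q i : ℝ) * ξ i| * Q ^ m < 2 * Q * ∑ i, |ξ i| + 1 := by
  set S := ∑ i, |ξ i|
  let f : (Fin m → Fin (Q + 1)) → ℝ := fun a => ∑ i, ((a i : ℕ) : ℝ) * ξ i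
  have hf : ∀ a, f a ∈ Set.Ico (-(Q * S)) (-(Q * S) + (2 * Q * S + 1)) := by
    intro a
    have : |f a| ≤ Q * S := by
      refine (Finset.abs_sum_le_sum_abs _ _).trans ?_
      rw [Finset.mul_sum]
      gcongr with i
      rw [abs_mul, Nat.abs_cast]
      gcongr
      exact_mod_cast Fin.is_le (a i)
    constructor <;> linarith [abs_le.1 this]
  have hcard : Q ^ m < Fintype.card (Fin m → Fin (Q + 1)) := by
    simpa using Nat.pow_lt_pow_left (lt_add_one Q) hm
  obtain ⟨x, y, hxy, hlt⟩ := exists_ne_abs_sub_mul_lt_of_card_lt f (pow_pos hQ m) hcard hf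
  refine ⟨fun i => (x i : ℤ) - (y i : ℤ), fun h => hxy (funext fun i => Fin.ext ?_), ?_, ?_⟩
  · simpa [sub_eq_zero] using congrFun h i
  · refine (pi_norm_le_iff_of_nonneg (Nat.cast_nonneg Q)).2 fun i => ?_
    have hx : ((x i : ℕ) : ℝ) ≤ Q := by exact_mod_cast Fin.is_le (x i)
    have hy : ((y i : ℕ) : ℝ) ≤ Q := by exact_mod_cast Fin.is_le (y i)
    simp only [Int.cast_sub, Int.cast_natCast, Real.norm_eq_abs, abs_sub_le_iff]
    constructor <;> linarith [(x i : ℕ).cast_nonneg (α := ℝ), (y i : ℕ).cast_nonneg (α := ℝ)]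
  · convert hlt using 3
    · simp [f, ← Finset.sum_sub_distrib, sub_mul]
    · exact (Nat.cast_pow Q m).symm

theorem eventually_exists_abs_sum_le_rpow {m : ℕ} (ξ : Fin m → ℝ) (hm : m ≠ 0) {ε : ℝ}
    (hε : 0 < ε) : ∀ᶠ Q : ℕ in atTop, ∃ q : Fin m → ℤ, q ≠ 0 ∧ supZ q ≤ Q ∧
      |∑ i, (q i : ℝ) * ξ i| ≤ (Q : ℝ) ^ (-((m : ℝ) - 1) + ε) := by
  set C := 2 * ∑ i, |ξ i| + 1
  filter_upwards [eventually_gt_atTop 0,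
    ((tendsto_rpow_atTop hε).comp tendsto_natCast_atTop_atTop).eventually_ge_atTop C]
    with Q hQ hQC
  obtain ⟨q, hq, hqQ, hlt⟩ := exists_ne_zero_supZ_le_abs_sum_mul_lt ξ hm hQ
  refine ⟨q, hq, hqQ, ?_⟩
  have hQ1 : (1 : ℝ) ≤ Q := by exact_mod_cast hQ
  have hQ0 : (0 : ℝ) < Q := by linarith
  have hexp : (Q : ℝ) ^ (-((m : ℝ) - 1) + ε) = Q ^ ε * Q / Q ^ m := by
    rw [neg_sub, add_comm, Real.rpow_add hQ0, Real.rpow_sub hQ0, Real.rpow_one,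
      Real.rpow_natCast, mul_div_assoc]
  rw [hexp, le_div_iff₀ (by positivity)]
  calc |∑ i, (q i : ℝ) * ξ i| * Q ^ m ≤ 2 * Q * ∑ i, |ξ i| + 1 := hlt.le
    _ ≤ C * Q := by nlinarith [Finset.sum_nonneg fun i (_ : i ∈ Finset.univ) => abs_nonneg (ξ i)]
    _ ≤ Q ^ ε * Q := by gcongr; exact hQC

theorem le_of_eventually_rpow_le_abs_sum {m : ℕ} {ξ : Fin m → ℝ} {σ τ : ℝ}
    (hlow : ∀ δ > (0 : ℝ), ∀ᶠ Q : ℕ in atTop, ∀ q : Fin m → ℤ, q ≠ 0 → supZ q ≤ Q →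
      (Q : ℝ) ^ (-σ - δ) ≤ |∑ i, (q i : ℝ) * ξ i|)
    {ε : ℕ → ℝ} (hε : Tendsto ε atTop (nhds 0))
    (hup : ∀ᶠ Q : ℕ in atTop, ∃ q : Fin m → ℤ, q ≠ 0 ∧ supZ q ≤ Q ∧
      |∑ i, (q i : ℝ) * ξ i| ≤ (Q : ℝ) ^ (-τ + ε Q)) : τ ≤ σ := by
  by_contra! hστ
  have hδ : 0 < (τ - σ) / 2 := by linarith
  obtain ⟨Q, ⟨q, hq, hqQ, hqup⟩, hQlow, hεQ, hQ⟩ := (hup.and <| (hlow _ hδ).and <|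
    (hε.eventually_lt_const hδ).and (eventually_ge_atTop 2)).exists
  have hQ1 : (1 : ℝ) < Q := by exact_mod_cast hQ
  have := (Real.rpow_le_rpow_left_iff hQ1).1 ((hQlow q hq hqQ).trans hqup)
  linarith

theorem stmt8 (m : ℕ) (hm : 2 ≤ m) :
    ∀ᵐ ξ ∂(volume : Measure (Fin m → ℝ)),
      (∀ ε > (0:ℝ), ∀ᶠ Q : ℕ in atTop, ∃ q : Fin m → ℤ, q ≠ 0 ∧ supZ q ≤ Q ∧
        (Q : ℝ) ^ (-((m : ℝ) - 1) - ε) ≤ |∑ i, (q i : ℝ) * ξ i| ∧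
        |∑ i, (q i : ℝ) * ξ i| ≤ (Q : ℝ) ^ (-((m : ℝ) - 1) + ε)) ∧
      sSup {τ : ℝ | 0 < τ ∧ ∃ ε : ℕ → ℝ, Tendsto ε atTop (nhds 0) ∧
        ∀ᶠ Q : ℕ in atTop, ∃ q : Fin m → ℤ, q ≠ 0 ∧ supZ q ≤ Q ∧
          (Q : ℝ) ^ (-τ - ε Q) ≤ |∑ i, (q i : ℝ) * ξ i| ∧
          |∑ i, (q i : ℝ) * ξ i| ≤ (Q : ℝ) ^ (-τ + ε Q)} = (m : ℝ) - 1 := by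
  have hm0 : m ≠ 0 := by omega
  filter_upwards [ae_eventually_rpow_le_abs_sum hm0] with ξ hlow
  have hboth : ∀ ε > (0:ℝ), ∀ᶠ Q : ℕ in atTop, ∃ q : Fin m → ℤ, q ≠ 0 ∧ supZ q ≤ Q ∧
      (Q : ℝ) ^ (-((m : ℝ) - 1) - ε) ≤ |∑ i, (q i : ℝ) * ξ i| ∧
      |∑ i, (q i : ℝ) * ξ i| ≤ (Q : ℝ) ^ (-((m : ℝ) - 1) + ε) := fun ε hε => by
    filter_upwards [eventually_exists_abs_sum_le_rpow ξ hm0 hε, hlow ε hε]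
      with Q hup hQ
    obtain ⟨q, hq, hqQ, hqup⟩ := hup
    exact ⟨q, hq, hqQ, hQ q hq hqQ, hqup⟩
  refine ⟨hboth, IsGreatest.csSup_eq ⟨⟨?_, exists_tendsto_zero_eventually _ hboth⟩, ?_⟩⟩
  · have : (2 : ℝ) ≤ m := by exact_mod_cast hm
    linarith
  · rintro τ ⟨-, ε, hε, hev⟩
    exact le_of_eventually_rpow_le_abs_sum hlow hε
      (hev.mono fun Q ⟨q, hq, hqQ, _, hup⟩ => ⟨q, hq, hqQ, hup⟩)
end

section
/- Let m > n > 0, e₁,…,e_n ∈ ℝ^m, and τ₁,…,τ_n > 0. The following two assertions are equivalent: (a) there exist functions ε_i : ℕ → ℝ with ε_i(Q) → 0 such that for every sufficiently large integer Q there exists q ∈ ℤ^m with ‖q‖ ≤ Q and Q^{−τ_i − ε_i(Q)} ≤ |q·e_i| ≤ Q^{−τ_i + ε_i(Q)} for all i; (b) there exist an increasing sequence (Q_k)_{k≥1} of positive integers with log Q_{k+1} / log Q_k → 1 as k → ∞, a sequence (q_k)_{k≥1} in ℤ^m, and functions δ_i : ℕ → ℝ with δ_i(k) → 0, such that for all k: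 ‖q_k‖ ≤ Q_k and Q_k^{−τ_i − δ_i(k)} ≤ |q_k·e_i| ≤ Q_k^{−τ_i + δ_i(k)} for all i. -/
/-!
(a) ⇒ (b): take `Q_k` to be consecutive integers, for which `log (Q + 1) / log Q → 1`.

(b) ⇒ (a): given `Q`, pick `k` with `Q_k ≤ Q < Q_{k+1}` and use `q_k`. Writing `Q_k = Q ^ θ`,
we get `log Q_k / log Q_{k+1} ≤ θ ≤ 1`, so `θ → 1`, and an exponent `-τ + d` at scale `Q_k` is an
exponent within `(1 - θ) |τ| + |d|` of `-τ` at scale `Q`.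
-/

open Filter

open Real Topology

theorem Real.tendsto_log_natCast_add_one_div_log :
    Tendsto (fun k : ℕ => log (k + 1) / log k) atTop (𝓝 1) := by
  have hsum : Tendsto (fun k : ℕ => 1 + (log (k + 1) - log k) / log k) atTop (𝓝 (1 + 0)) :=
    tendsto_const_nhds.add <| tendsto_log_nat_add_one_sub_log.div_atTop <|
      tendsto_log_atTop.comp tendsto_natCast_atTop_atTop
  rw [add_zero] at hsum
  refine hsum.congr' ?_
  filter_upwards [eventually_ge_atTop 2] with k hk
  have hlog : log k ≠ 0 := (log_pos (by exact_mod_cast hk)).ne'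
  rw [sub_div, div_self hlog]
  ring

theorem abs_mul_add_sub_le {θ : ℝ} (hθ₀ : 0 ≤ θ) (hθ₁ : θ ≤ 1) (a d : ℝ) :
    |θ * (a + d) - a| ≤ (1 - θ) * |a| + |d| :=
  calc |θ * (a + d) - a| = |(θ - 1) * a + θ * d| := by ring_nf
    _ ≤ |(θ - 1) * a| + |θ * d| := abs_add_le _ _
    _ = (1 - θ) * |a| + θ * |d| := by
        rw [abs_mul, abs_mul, abs_of_nonneg hθ₀, abs_of_nonpos (by linarith), neg_sub]
    _ ≤ (1 - θ) * |a| + |d| := by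
        gcongr
        exact mul_le_of_le_one_left (abs_nonneg d) hθ₁

/-- `P = Q ^ θ` with `θ = logb Q P ∈ [0, 1]`. -/
theorem Real.rpow_add_mem_Icc_of_le {P Q : ℝ} (hP : 1 ≤ P) (hPQ : P ≤ Q) (hQ : 1 < Q) (a d : ℝ) :
    P ^ (a + d) ∈ Set.Icc (Q ^ (a - ((1 - logb Q P) * |a| + |d|)))
      (Q ^ (a + ((1 - logb Q P) * |a| + |d|))) := by
  have hθ₀ : 0 ≤ logb Q P := logb_nonneg hQ hP
  have hθ₁ : logb Q P ≤ 1 :=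
    (logb_le_iff_le_rpow hQ (by linarith)).2 (by rwa [rpow_one])
  have hpow : P ^ (a + d) = Q ^ (logb Q P * (a + d)) := by
    rw [rpow_mul (by linarith), rpow_logb (by linarith) hQ.ne' (by linarith)]
  obtain ⟨hlow, hupp⟩ := abs_le.1 (abs_mul_add_sub_le hθ₀ hθ₁ a d)
  rw [hpow]
  exact ⟨rpow_le_rpow_of_exponent_le hQ.le (by linarith),
    rpow_le_rpow_of_exponent_le hQ.le (by linarith)⟩

section LastIndex

variable {Qs : ℕ → ℕ}

/-- For strictly increasing `Qs`, every `k` with `Qs k ≤ Q` is `≤ Q`, so this is the largest one. -/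
def lastIndexLE (Qs : ℕ → ℕ) (Q : ℕ) : ℕ := Nat.findGreatest (fun k => Qs k ≤ Q) Q

theorem apply_lastIndexLE_le {Q : ℕ} (hQ : Qs 0 ≤ Q) : Qs (lastIndexLE Qs Q) ≤ Q :=
  Nat.findGreatest_spec (P := fun k => Qs k ≤ Q) (Nat.zero_le Q) hQ

theorem lt_apply_lastIndexLE_succ (hQs : StrictMono Qs) (Q : ℕ) :
    Q < Qs (lastIndexLE Qs Q + 1) := by
  by_contra! hle
  exact Nat.findGreatest_is_greatest (Nat.lt_succ_self _) ((hQs.le_apply).trans hle) hle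

theorem tendsto_lastIndexLE (hQs : StrictMono Qs) : Tendsto (lastIndexLE Qs) atTop atTop :=
  tendsto_atTop_atTop.2 fun b => ⟨Qs b, fun _ hQ => Nat.le_findGreatest (hQs.le_apply.trans hQ) hQ⟩

theorem tendsto_logb_apply_lastIndexLE (hQs : StrictMono Qs)
    (hratio : Tendsto (fun k => log (Qs (k + 1)) / log (Qs k)) atTop (𝓝 1)) :
    Tendsto (fun Q : ℕ => logb Q (Qs (lastIndexLE Qs Q))) atTop (𝓝 1) := by
  have hinv : Tendsto (fun k => log (Qs k) / log (Qs (k + 1))) atTop (𝓝 1) := by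
    simpa only [inv_div, inv_one] using hratio.inv₀ one_ne_zero
  refine tendsto_of_tendsto_of_tendsto_of_le_of_le' (hinv.comp (tendsto_lastIndexLE hQs))
    tendsto_const_nhds ?_ ?_
  all_goals
    filter_upwards [eventually_ge_atTop (max (Qs 0) 2),
      (tendsto_lastIndexLE hQs).eventually_ge_atTop 1] with Q hQ hK
    have hPQ : Qs (lastIndexLE Qs Q) ≤ Q := apply_lastIndexLE_le (le_of_max_le_left hQ)
    have hP : 1 ≤ Qs (lastIndexLE Qs Q) := hK.trans hQs.le_apply
    have hQ2 : (2 : ℝ) ≤ Q := by exact_mod_cast le_of_max_le_right hQ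
  · have hQQ' : (Q : ℝ) ≤ Qs (lastIndexLE Qs Q + 1) := by
      exact_mod_cast (lt_apply_lastIndexLE_succ hQs Q).le
    exact div_le_div_of_nonneg_left (log_nonneg (by exact_mod_cast hP))
      (log_pos (by linarith)) (log_le_log (by linarith) hQQ')
  · exact (logb_le_iff_le_rpow (by linarith) (by exact_mod_cast hP)).2
      (by rw [rpow_one]; exact_mod_cast hPQ)

end LastIndex

section Exponents

variable {α ι : Type*} (h : α → ℝ) (v : ι → α → ℝ) (τ : ι → ℝ)

def AttainsExponentsAt (ε : ι → ℝ) (Q : ℕ) (x : α) : Prop :=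
  h x ≤ Q ∧ ∀ i, (Q : ℝ) ^ (-(τ i) - ε i) ≤ v i x ∧ v i x ≤ (Q : ℝ) ^ (-(τ i) + ε i)

variable {h v τ}

theorem exists_seq_of_eventually_attainsExponentsAt {ε : ι → ℕ → ℝ}
    (hε : ∀ i, Tendsto (ε i) atTop (𝓝 0))
    (hx : ∀ᶠ Q : ℕ in atTop, ∃ x, AttainsExponentsAt h v τ (fun i => ε i Q) Q x) :
    ∃ Qs : ℕ → ℕ, StrictMono Qs ∧ (∀ k, 0 < Qs k) ∧
      Tendsto (fun k => log (Qs (k + 1)) / log (Qs k)) atTop (𝓝 1) ∧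
      ∃ xs : ℕ → α, ∃ δ : ι → ℕ → ℝ, (∀ i, Tendsto (δ i) atTop (𝓝 0)) ∧
        ∀ k, AttainsExponentsAt h v τ (fun i => δ i k) (Qs k) (xs k) := by
  obtain ⟨N, hN⟩ := eventually_atTop.1 hx
  choose xs hxs using fun k => hN (k + (N + 1)) (by omega)
  have hshift : Tendsto (fun k => k + (N + 1)) atTop atTop := tendsto_add_atTop_nat _
  refine ⟨fun k => k + (N + 1), strictMono_nat_of_lt_succ fun k => by omega,
    fun k => Nat.succ_pos _, ?_, xs, fun i k => ε i (k + (N + 1)), fun i => (hε i).comp hshift,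
    hxs⟩
  refine (tendsto_log_natCast_add_one_div_log.comp hshift).congr fun k => ?_
  simp only [Function.comp_apply]
  push_cast
  ring_nf

theorem eventually_attainsExponentsAt_of_seq {Qs : ℕ → ℕ} (hQs : StrictMono Qs)
    (hratio : Tendsto (fun k => log (Qs (k + 1)) / log (Qs k)) atTop (𝓝 1))
    {xs : ℕ → α} {δ : ι → ℕ → ℝ} (hδ : ∀ i, Tendsto (δ i) atTop (𝓝 0))
    (hxs : ∀ k, AttainsExponentsAt h v τ (fun i => δ i k) (Qs k) (xs k)) :
    ∃ ε : ι → ℕ → ℝ, (∀ i, Tendsto (ε i) atTop (𝓝 0)) ∧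
      ∀ᶠ Q : ℕ in atTop, ∃ x, AttainsExponentsAt h v τ (fun i => ε i Q) Q x := by
  set K := lastIndexLE Qs
  have hK : Tendsto K atTop atTop := tendsto_lastIndexLE hQs
  have hθ := tendsto_logb_apply_lastIndexLE hQs hratio
  refine ⟨fun i Q => (1 - logb Q (Qs (K Q))) * |τ i| + |δ i (K Q)|, fun i => ?_, ?_⟩
  · simpa using
      ((tendsto_const_nhds (x := (1 : ℝ)).sub hθ).mul_const |τ i|).add ((hδ i).comp hK).abs
  filter_upwards [eventually_ge_atTop (max (Qs 0) 2), hK.eventually_ge_atTop 1] with Q hQ hK1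
  obtain ⟨hheight, hval⟩ := hxs (K Q)
  have hPQ : Qs (K Q) ≤ Q := apply_lastIndexLE_le (le_of_max_le_left hQ)
  have hP : (1 : ℝ) ≤ Qs (K Q) := by exact_mod_cast hK1.trans hQs.le_apply
  have hQ : (1 : ℝ) < Q := by exact_mod_cast (le_of_max_le_right hQ : 2 ≤ Q)
  refine ⟨xs (K Q), hheight.trans (by exact_mod_cast hPQ), fun i => ⟨?_, ?_⟩⟩
  · have := (rpow_add_mem_Icc_of_le hP (by exact_mod_cast hPQ) hQ (-(τ i)) (-δ i (K Q))).1
    rw [abs_neg, abs_neg, ← sub_eq_add_neg] at this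
    exact this.trans (hval i).1
  · have := (rpow_add_mem_Icc_of_le hP (by exact_mod_cast hPQ) hQ (-(τ i)) (δ i (K Q))).2
    rw [abs_neg] at this
    exact (hval i).2.trans this

end Exponents

theorem stmt18_general (m n : ℕ)
    (e : Fin n → Fin m → ℝ) (τ : Fin n → ℝ) :
    (∃ ε : Fin n → ℕ → ℝ, (∀ i, Tendsto (ε i) atTop (nhds 0)) ∧
      ∀ᶠ Q : ℕ in atTop, ∃ q : Fin m → ℤ, supZ q ≤ Q ∧
        ∀ i, (Q : ℝ) ^ (-(τ i) - ε i Q) ≤ |∑ k, (q k : ℝ) * e i k| ∧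
          |∑ k, (q k : ℝ) * e i k| ≤ (Q : ℝ) ^ (-(τ i) + ε i Q))
    ↔
    (∃ Qs : ℕ → ℕ, StrictMono Qs ∧ (∀ k, 0 < Qs k) ∧
      Tendsto (fun k => Real.log (Qs (k + 1)) / Real.log (Qs k)) atTop (nhds 1) ∧
      ∃ qs : ℕ → Fin m → ℤ, ∃ δ : Fin n → ℕ → ℝ,
        (∀ i, Tendsto (δ i) atTop (nhds 0)) ∧
        ∀ k, supZ (qs k) ≤ Qs k ∧
          ∀ i, (Qs k : ℝ) ^ (-(τ i) - δ i k) ≤ |∑ l, (qs k l : ℝ) * e i l| ∧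
            |∑ l, (qs k l : ℝ) * e i l| ≤ (Qs k : ℝ) ^ (-(τ i) + δ i k)) :=
  ⟨fun ⟨_, hε, hq⟩ => exists_seq_of_eventually_attainsExponentsAt
      (h := supZ) (v := fun i q => |∑ k, (q k : ℝ) * e i k|) hε hq,
    fun ⟨_, hQs, _, hratio, _, _, hδ, hqs⟩ => eventually_attainsExponentsAt_of_seq
      (h := supZ) (v := fun i q => |∑ k, (q k : ℝ) * e i k|) hQs hratio hδ hqs⟩

theorem stmt18 (m n : ℕ) (hn : 0 < n) (hmn : n < m)
    (e : Fin n → Fin m → ℝ) (τ : Fin n → ℝ) (hτ : ∀ i, 0 < τ i) :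
    (∃ ε : Fin n → ℕ → ℝ, (∀ i, Tendsto (ε i) atTop (nhds 0)) ∧
      ∀ᶠ Q : ℕ in atTop, ∃ q : Fin m → ℤ, supZ q ≤ Q ∧
        ∀ i, (Q : ℝ) ^ (-(τ i) - ε i Q) ≤ |∑ k, (q k : ℝ) * e i k| ∧
          |∑ k, (q k : ℝ) * e i k| ≤ (Q : ℝ) ^ (-(τ i) + ε i Q))
    ↔
    (∃ Qs : ℕ → ℕ, StrictMono Qs ∧ (∀ k, 0 < Qs k) ∧
      Tendsto (fun k => Real.log (Qs (k + 1)) / Real.log (Qs k)) atTop (nhds 1) ∧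
      ∃ qs : ℕ → Fin m → ℤ, ∃ δ : Fin n → ℕ → ℝ,
        (∀ i, Tendsto (δ i) atTop (nhds 0)) ∧
        ∀ k, supZ (qs k) ≤ Qs k ∧
          ∀ i, (Qs k : ℝ) ^ (-(τ i) - δ i k) ≤ |∑ l, (qs k l : ℝ) * e i l| ∧
            |∑ l, (qs k l : ℝ) * e i l| ≤ (Qs k : ℝ) ^ (-(τ i) + δ i k)) :=
  stmt18_general m n e τ
end

section
/- For almost every real number ξ (with respect to Lebesgue measure) and every constant c > 0, there exist infinitely many integers Q such that any two nonzero vectors q = (q₁,q₂) and q' = (q'₁,q'₂) in ℤ² satisfying max(|q₁|,|q₂|) ≤ c·Q, max(|q'₁|,|q'₂|) ≤ c·Q, |q₁ξ − q₂| ≤ c·Q^{−1} and |q'₁ξ − q'₂| ≤ c·Q^{−1} are linearly dependent over ℝ. -/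
/-!
For almost every `ξ` and every `ε > 0` there are arbitrarily large `q` with `‖q ξ‖ < ε / q`, where
`‖·‖` is the distance to the nearest integer: the set of `ξ` with `ε / q ≤ ‖q ξ‖` for all `q ≥ N`
is porous (next to each of its points it misses a ball of proportional size around a Dirichlet
approximation `p / q`), hence null by Lebesgue's density theorem. Given such `q, p` with `ε` small
in terms of `c`, take `Q = q m` with `m > 2 c`. Every admissible `(a, b)` at scale `Q` satisfies
`|a p - b q| ≤ |a| |q ξ - p| + q |a ξ - b| ≤ c m ε + c / m < 1`, so it is parallel to `(q, p)`,
and any two admissible vectors are parallel to each other.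
-/

open MeasureTheory Filter Metric Set Topology

theorem Irrational.exists_rat_abs_sub_lt_one_div_den_sq_and_lt_den {ξ : ℝ} (hξ : Irrational ξ)
    (M : ℕ) : ∃ r : ℚ, |ξ - r| < 1 / (r.den : ℝ) ^ 2 ∧ M < r.den := by
  set K : ℤ := ⌈|ξ| + 1⌉ * M
  have hfin : ((fun z : ℤ × ℕ => (z.1 / z.2 : ℚ)) '' (Icc (-K) K ×ˢ Icc 0 M)).Finite :=
    ((finite_Icc _ _).prod (finite_Icc _ _)).image _
  obtain ⟨r, hr, hrM⟩ :=
    ((Real.infinite_rat_abs_sub_lt_one_div_den_sq_of_irrational hξ).sdiff hfin).nonempty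
  refine ⟨r, hr, lt_of_not_ge fun hden => hrM ⟨(r.num, r.den), ⟨?_, Nat.zero_le _, hden⟩,
    Rat.num_div_den r⟩⟩
  have hr : |ξ - r| < 1 / (r.den : ℝ) ^ 2 := hr
  have hden1 : (1 : ℝ) ≤ r.den := by exact_mod_cast r.pos
  have hr1 : |(r : ℝ)| ≤ |ξ| + 1 := by
    have : 1 / (r.den : ℝ) ^ 2 ≤ 1 := div_le_one_of_le₀ (one_le_pow₀ hden1) (by positivity)
    have := abs_sub_abs_le_abs_sub (r : ℝ) ξ
    rw [abs_sub_comm] at this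
    linarith
  have hnum : |(r.num : ℝ)| = |(r : ℝ)| * r.den := by
    rw [Rat.cast_def, abs_div, Nat.abs_cast, div_mul_cancel₀ _ (by positivity)]
  have : |(r.num : ℝ)| ≤ K := by
    rw [hnum]
    push_cast [K]
    gcongr
    exact hr1.trans (Int.le_ceil _)
  exact abs_le.1 (by exact_mod_cast this)

theorem Real.volume_eq_zero_of_porous {s : Set ℝ} (hs : MeasurableSet s) {κ : ℝ} (hκ : 0 < κ)
    (h : ∀ x ∈ s, ∃ᶠ r in 𝓝[>] 0,
      ∃ y, ball y (κ * r) ⊆ closedBall x r ∧ Disjoint s (ball y (κ * r))) :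
    volume s = 0 := by
  by_contra hs0
  have : (ae (volume.restrict s)).NeBot := ae_neBot.2 (by rwa [Ne, Measure.restrict_eq_zero])
  obtain ⟨x, hx, hdens⟩ :=
    ((ae_restrict_mem hs).and (Besicovitch.ae_tendsto_measure_inter_div volume s)).exists
  have hlt : ENNReal.ofReal (1 - κ) < 1 := ENNReal.ofReal_lt_one.2 (by linarith)
  obtain ⟨r, ⟨y, hsub, hdisj⟩, hratio, hr⟩ :=
    ((h x hx).and_eventually
      ((hdens.eventually_const_lt hlt).and self_mem_nhdsWithin)).exists
  have hr : 0 < r := hr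
  have hunion :
      volume (s ∩ closedBall x r) + volume (ball y (κ * r)) ≤ volume (closedBall x r) := by
    rw [← measure_union (hdisj.mono_left inter_subset_left) measurableSet_ball]
    exact measure_mono (union_subset inter_subset_right hsub)
  rw [Real.volume_ball, Real.volume_closedBall] at hunion
  rw [Real.volume_closedBall] at hratio
  have hbound : volume (s ∩ closedBall x r) ≤ ENNReal.ofReal (1 - κ) * ENNReal.ofReal (2 * r) :=
    calc volume (s ∩ closedBall x r)
        ≤ ENNReal.ofReal (2 * r) - ENNReal.ofReal (2 * (κ * r)) :=
          ENNReal.le_sub_of_add_le_right ENNReal.ofReal_ne_top hunion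
      _ = ENNReal.ofReal ((1 - κ) * (2 * r)) := by
          rw [← ENNReal.ofReal_sub _ (by positivity)]; ring_nf
      _ = ENNReal.ofReal (1 - κ) * ENNReal.ofReal (2 * r) := ENNReal.ofReal_mul' (by positivity)
  exact hratio.not_ge (ENNReal.div_le_of_le_mul hbound)

def badlyApproximable (ε : ℝ) (N : ℕ) : Set ℝ :=
  {ξ | ∀ q : ℕ, N ≤ q → ∀ p : ℤ, ε / q ≤ |q * ξ - p|}

theorem isClosed_badlyApproximable (ε : ℝ) (N : ℕ) : IsClosed (badlyApproximable ε N) := by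
  simp only [badlyApproximable, ofPred_forall]
  exact isClosed_iInter fun q => isClosed_iInter fun _ => isClosed_iInter fun p =>
    isClosed_le continuous_const (by fun_prop)

theorem Irrational.of_mem_badlyApproximable {ε : ℝ} (hε : 0 < ε) {N : ℕ} {ξ : ℝ}
    (h : ξ ∈ badlyApproximable ε N) : Irrational ξ := by
  rintro ⟨r, rfl⟩
  have hN : N ≤ r.den * (N + 1) := le_mul_of_one_le_of_le r.pos (Nat.le_succ N)
  have hr := h _ hN (r.num * (N + 1))
  have hzero : ((r.den * (N + 1) : ℕ) : ℝ) * r - ((r.num * (N + 1) : ℤ) : ℝ) = 0 := by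
    rw [Rat.cast_def]; push_cast; field_simp; ring
  rw [hzero, abs_zero] at hr
  exact hr.not_gt (div_pos hε (by exact_mod_cast Nat.mul_pos r.pos N.succ_pos))

theorem frequently_disjoint_badlyApproximable {ε : ℝ} (hε : 0 < ε) {N : ℕ} {x : ℝ}
    (hx : x ∈ badlyApproximable ε N) :
    ∃ᶠ r in 𝓝[>] 0, ∃ y, ball y (ε / (1 + ε) * r) ⊆ closedBall x r ∧
      Disjoint (badlyApproximable ε N) (ball y (ε / (1 + ε) * r)) := by
  rw [(nhdsGT_basis 0).frequently_iff]
  intro r₀ hr₀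
  obtain ⟨a, hax, hden⟩ := (Irrational.of_mem_badlyApproximable hε hx
    ).exists_rat_abs_sub_lt_one_div_den_sq_and_lt_den (max N ⌈(1 + ε) / r₀⌉₊)
  set q : ℝ := (a.den : ℝ) with hq
  have hq1 : 1 ≤ q := by rw [hq]; exact_mod_cast a.pos
  have hqr₀ : (1 + ε) / r₀ < q :=
    (Nat.le_ceil _).trans_lt (by rw [hq]; exact_mod_cast (le_max_right _ _).trans_lt hden)
  have hκr : ε / (1 + ε) * ((1 + ε) / q ^ 2) = ε / q ^ 2 := by field_simp
  refine ⟨(1 + ε) / q ^ 2, ⟨by positivity, ?_⟩, (a : ℝ), ?_⟩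
  · rw [div_lt_iff₀ hr₀] at hqr₀
    rw [div_lt_iff₀ (by positivity)]
    nlinarith
  rw [hκr]
  constructor
  · refine ball_subset_closedBall.trans (closedBall_subset_closedBall' ?_)
    rw [Real.dist_eq, abs_sub_comm]
    linarith [show ε / q ^ 2 + 1 / q ^ 2 = (1 + ε) / q ^ 2 by ring]
  · refine disjoint_left.2 fun z hz hza => (hz a.den ?_ a.num).not_gt ?_
    · exact_mod_cast (le_max_left _ _).trans hden.le
    · rw [mem_ball, Real.dist_eq] at hza
      have hqz : (a.den : ℝ) * z - a.num = q * (z - a) := by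
        rw [hq, Rat.cast_def]; field_simp
      rw [hqz, abs_mul, abs_of_pos (by positivity)]
      calc q * |z - a| < q * (ε / q ^ 2) := by gcongr
        _ = ε / q := by field_simp

theorem volume_badlyApproximable {ε : ℝ} (hε : 0 < ε) (N : ℕ) :
    volume (badlyApproximable ε N) = 0 :=
  Real.volume_eq_zero_of_porous (isClosed_badlyApproximable ε N).measurableSet (by positivity)
    fun _ hx => frequently_disjoint_badlyApproximable hε hx

theorem ae_exists_abs_mul_sub_lt :
    ∀ᵐ ξ : ℝ, ∀ ε > 0, ∀ N : ℕ, ∃ q : ℕ, N ≤ q ∧ ∃ p : ℤ, |q * ξ - p| < ε / q := by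
  have hae : ∀ᵐ ξ : ℝ, ∀ n N : ℕ, ξ ∉ badlyApproximable (1 / (n + 1)) N := by
    simp only [ae_all_iff]
    exact fun n N => measure_eq_zero_iff_ae_notMem.1 (volume_badlyApproximable (by positivity) N)
  filter_upwards [hae] with ξ hξ ε hε N
  obtain ⟨n, hn⟩ := exists_nat_one_div_lt hε
  have hnot := hξ n N
  simp only [badlyApproximable, mem_ofPred_eq, not_forall, not_le] at hnot
  obtain ⟨q, hNq, p, hlt⟩ := hnot
  exact ⟨q, hNq, p, hlt.trans_le (div_le_div_of_nonneg_right hn.le q.cast_nonneg)⟩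

theorem Int.mul_sub_mul_eq_zero_of_abs_lt {ξ : ℝ} {a b p q : ℤ}
    (h : |(a : ℝ)| * |q * ξ - p| + |(q : ℝ)| * |a * ξ - b| < 1) : a * p - b * q = 0 := by
  have hid : ((a * p - b * q : ℤ) : ℝ) = q * (a * ξ - b) - a * (q * ξ - p) := by push_cast; ring
  have hlt : |((a * p - b * q : ℤ) : ℝ)| < 1 :=
    calc |((a * p - b * q : ℤ) : ℝ)| ≤ |q * (a * ξ - b)| + |a * (q * ξ - p)| := by
          rw [hid]; exact abs_sub _ _
      _ < 1 := by rw [abs_mul, abs_mul]; linarith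
  exact Int.abs_lt_one_iff.1 (by exact_mod_cast hlt)

theorem mul_sub_mul_eq_zero_at_scale {ξ c ε : ℝ} {q m : ℕ} {p a b : ℤ} (hq : 0 < q)
    (hqp : |q * ξ - p| ≤ ε / q) (hcm : c * m * ε + c / m < 1)
    (ha : |(a : ℝ)| ≤ c * (q * m : ℕ)) (hab : |a * ξ - b| ≤ c / (q * m : ℕ)) :
    a * p - b * q = 0 := by
  have hqR : (0 : ℝ) < q := by exact_mod_cast hq
  push_cast at ha hab
  refine Int.mul_sub_mul_eq_zero_of_abs_lt (ξ := ξ) ?_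
  push_cast
  calc |(a : ℝ)| * |q * ξ - p| + |(q : ℝ)| * |a * ξ - b|
      ≤ c * (q * m) * (ε / q) + q * (c / (q * m)) := by
        rw [abs_of_pos hqR]
        exact add_le_add (mul_le_mul ha hqp (abs_nonneg _) ((abs_nonneg _).trans ha))
          (mul_le_mul_of_nonneg_left hab hqR.le)
    _ = c * m * ε + c / m := by
        rw [show (q : ℝ) * (c / (q * m)) = c / m by
          rw [mul_div_assoc', mul_div_mul_left _ _ hqR.ne']]
        field_simp
    _ < 1 := hcm

theorem stmt19 :
    ∀ᵐ ξ ∂(volume : Measure ℝ), ∀ c : ℝ, 0 < c →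
      {Q : ℕ | 0 < Q ∧ ∀ q q' : ℤ × ℤ, q ≠ 0 → q' ≠ 0 →
        max |(q.1 : ℝ)| |(q.2 : ℝ)| ≤ c * Q →
        max |(q'.1 : ℝ)| |(q'.2 : ℝ)| ≤ c * Q →
        |(q.1 : ℝ) * ξ - (q.2 : ℝ)| ≤ c / Q →
        |(q'.1 : ℝ) * ξ - (q'.2 : ℝ)| ≤ c / Q →
        q.1 * q'.2 - q.2 * q'.1 = 0}.Infinite := by
  filter_upwards [ae_exists_abs_mul_sub_lt] with ξ hξ c hc
  obtain ⟨m, hm⟩ := exists_nat_gt (2 * c)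
  have hm0 : (0 : ℝ) < m := by linarith
  have hcm : c * m * (1 / (2 * c * m)) + c / m < 1 := by
    have h₁ : c * m * (1 / (2 * c * m)) = 1 / 2 := by field_simp
    have h₂ : c / m < 1 / 2 := by rw [div_lt_iff₀ hm0]; linarith
    linarith
  refine Set.infinite_of_forall_exists_gt fun N => ?_
  obtain ⟨q, hNq, p, hqp⟩ := hξ (1 / (2 * c * m)) (by positivity) (N + 1)
  have hq : 0 < q := by omega
  have hmN : 0 < m := by exact_mod_cast hm0
  refine ⟨q * m, ⟨Nat.mul_pos hq hmN, fun v v' _ _ hv hv' hvξ hv'ξ => ?_⟩,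
    by nlinarith⟩
  have h := mul_sub_mul_eq_zero_at_scale hq hqp.le hcm ((le_max_left _ _).trans hv) hvξ
  have h' := mul_sub_mul_eq_zero_at_scale hq hqp.le hcm ((le_max_left _ _).trans hv') hv'ξ
  have hcross : (v.1 * v'.2 - v.2 * v'.1) * q = 0 := by linear_combination v'.1 * h - v.1 * h'
  exact (mul_eq_zero.1 hcross).resolve_right (by exact_mod_cast hq.ne')
end
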